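/- arXiv:1003.4365 — 4 statements merged into one kernel-verified Lean document; each statement's English description precedes it below -/
import Mathlib

section
/- Every lattice-free closed convex set K ⊆ ℝ² with non-empty interior is contained in a maximal lattice-free closed convex set H ⊆ ℝ² with non-empty interior (i.e., H is lattice-free and H is not properly contained in any lattice-free closed convex set with non-empty interior). -/
open MeasureTheory

noncomputable def dot2 (u x : ℝ × ℝ) : ℝ := u.1 * x.1 + u.2 * x.2

noncomputable def widthFn (K : Set (ℝ × ℝ)) (u : ℝ × ℝ) : ℝ :=
  sSup (dot2 u '' K) - sInf (dot2 u '' K)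

noncomputable def latticeWidth (K : Set (ℝ × ℝ)) : ℝ :=
  sInf {w | ∃ u : ℤ × ℤ, u ≠ 0 ∧ w = widthFn K ((u.1 : ℝ), (u.2 : ℝ))}

def IsLatticePoint (p : ℝ × ℝ) : Prop := ∃ z : ℤ × ℤ, p = ((z.1 : ℝ), (z.2 : ℝ))

def LatticeFree (K : Set (ℝ × ℝ)) : Prop := ∀ p ∈ interior K, ¬ IsLatticePoint p

def CentrallySymmetric (K : Set (ℝ × ℝ)) : Prop := ∃ c : ℝ × ℝ, ∀ x, x ∈ K ↔ (2 : ℝ) • c - x ∈ K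

def Covers (t : ℝ) (K : Set (ℝ × ℝ)) : Prop :=
  ∀ p : ℝ × ℝ, ∃ x ∈ K, ∃ z : ℤ × ℤ, p = t • x + ((z.1 : ℝ), (z.2 : ℝ))

noncomputable def mu2 (K : Set (ℝ × ℝ)) : ℝ := sInf {t : ℝ | 0 ≤ t ∧ Covers t K}

def MeetsAllLines (t : ℝ) (K : Set (ℝ × ℝ)) : Prop :=
  ∀ p v : ℝ × ℝ, v ≠ 0 → ∃ s : ℝ, ∃ x ∈ K, ∃ z : ℤ × ℤ,
    p + s • v = t • x + ((z.1 : ℝ), (z.2 : ℝ))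

noncomputable def mu1 (K : Set (ℝ × ℝ)) : ℝ := sInf {t : ℝ | 0 ≤ t ∧ MeetsAllLines t K}

/-- In an open set, we can push a point slightly away from `p`. -/
lemma push_exists {O : Set (ℝ × ℝ)} (hO : IsOpen O) {z : ℝ × ℝ} (hz : z ∈ O) (p : ℝ × ℝ) :
    ∃ t : ℝ, 0 < t ∧ z + t • (z - p) ∈ O := by
  obtain ⟨ε, hε, hball⟩ := Metric.isOpen_iff.1 hO z hz
  refine ⟨ε / (2 * (‖z - p‖ + 1)), by positivity, hball ?_⟩
  have hn : (0:ℝ) < ‖z - p‖ + 1 := by positivity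
  have : dist (z + (ε / (2 * (‖z - p‖ + 1))) • (z - p)) z
      = (ε / (2 * (‖z - p‖ + 1))) * ‖z - p‖ := by
    rw [dist_eq_norm]
    simp only [add_sub_cancel_left, norm_smul, Real.norm_eq_abs]
    rw [abs_of_pos (by positivity)]
  rw [Metric.mem_ball, this]
  calc (ε / (2 * (‖z - p‖ + 1))) * ‖z - p‖
      ≤ (ε / (2 * (‖z - p‖ + 1))) * (‖z - p‖ + 1) := by
        apply mul_le_mul_of_nonneg_left (by linarith) (by positivity)
    _ = ε / 2 := by field_simp
    _ < ε := by linarith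

lemma combo_back {s : Set (ℝ × ℝ)} (hs : Convex ℝ s) {p z : ℝ × ℝ} {t : ℝ} (ht : 0 < t)
    (hp : p ∈ interior s) (hq : z + t • (z - p) ∈ closure s) : z ∈ interior s := by
  have h1t : (0:ℝ) < 1 + t := by linarith
  have key : (t/(1+t)) • p + (1/(1+t)) • (z + t • (z - p)) = z := by
    have := h1t.ne'
    ext <;> simp [Prod.smul_def, Prod.add_def, Prod.sub_def] <;> field_simp <;> ring
  have hab : t/(1+t) + 1/(1+t) = 1 := by field_simp; ring
  have := hs.combo_interior_closure_mem_interior hp hq (div_pos ht h1t)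
    (by positivity : (0:ℝ) ≤ 1/(1+t)) hab
  rwa [key] at this
lemma chain_interior_mem {c : Set (Set (ℝ × ℝ))} (hc : IsChain (· ⊆ ·) c)
    (hconv : ∀ s ∈ c, Convex ℝ s) {K₀ : Set (ℝ × ℝ)} (hK₀ : K₀ ∈ c)
    {p : ℝ × ℝ} (hp : p ∈ interior K₀) {z : ℝ × ℝ}
    (hz : z ∈ interior (closure (⋃₀ c))) : ∃ s ∈ c, z ∈ interior s := by
  set U := ⋃₀ c with hU
  have hUconv : Convex ℝ U := (hc.directedOn).convex_sUnion fun s hs => hconv s hs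
  have hpU : p ∈ interior U :=
    interior_mono (Set.subset_sUnion_of_mem hK₀) hp
  -- step 1: z ∈ interior U
  have hzU : z ∈ interior U := by
    obtain ⟨t, ht, hq⟩ := push_exists isOpen_interior hz p
    exact combo_back hUconv ht hpU (interior_subset hq)
  -- step 2: push within interior U to land in U, hence in some member
  obtain ⟨t, ht, hq⟩ := push_exists isOpen_interior hzU p
  obtain ⟨s, hs, hqs⟩ := (interior_subset hq : z + t • (z - p) ∈ U)
  rcases hc.total hK₀ hs with h | h
  · exact ⟨s, hs, combo_back (hconv s hs) ht (interior_mono h hp) (subset_closure hqs)⟩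
  · exact ⟨K₀, hK₀, combo_back (hconv K₀ hK₀) ht hp (subset_closure (h hqs))⟩

theorem exists_maximal_latticeFree (K : Set (ℝ × ℝ)) (hK : IsClosed K) (hconv : Convex ℝ K)
    (hne : (interior K).Nonempty) (hfree : LatticeFree K) :
    ∃ H : Set (ℝ × ℝ), IsClosed H ∧ Convex ℝ H ∧ (interior H).Nonempty ∧ LatticeFree H ∧
      K ⊆ H ∧ ∀ L : Set (ℝ × ℝ), IsClosed L → Convex ℝ L → (interior L).Nonempty →
        LatticeFree L → H ⊆ L → H = L := by
  set S : Set (Set (ℝ × ℝ)) :=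
    {L | IsClosed L ∧ Convex ℝ L ∧ (interior L).Nonempty ∧ LatticeFree L} with hS
  have hKS : K ∈ S := ⟨hK, hconv, hne, hfree⟩
  have hub : ∀ c ⊆ S, IsChain (· ⊆ ·) c → c.Nonempty → ∃ ub ∈ S, ∀ s ∈ c, s ⊆ ub := by
    intro c hcS hchain hcne
    obtain ⟨K₀, hK₀⟩ := hcne
    have hconvs : ∀ s ∈ c, Convex ℝ s := fun s hs => (hcS hs).2.1
    obtain ⟨p, hp⟩ := (hcS hK₀).2.2.1
    refine ⟨closure (⋃₀ c), ⟨isClosed_closure,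
      ((hchain.directedOn).convex_sUnion hconvs).closure, ?_, ?_⟩,
      fun s hs => (Set.subset_sUnion_of_mem hs).trans subset_closure⟩
    · exact ⟨p, interior_mono ((Set.subset_sUnion_of_mem hK₀).trans subset_closure) hp⟩
    · intro q hq hlat
      obtain ⟨s, hs, hqs⟩ := chain_interior_mem hchain hconvs hK₀ hp hq
      exact (hcS hs).2.2.2 q hqs hlat
  obtain ⟨m, hKm, hmax⟩ := zorn_subset_nonempty S hub K hKS
  have hmS := hmax.1
  refine ⟨m, hmS.1, hmS.2.1, hmS.2.2.1, hmS.2.2.2, hKm, fun L hL hLc hLne hLf hmL => ?_⟩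
  exact hmL.antisymm (hmax.2 ⟨hL, hLc, hLne, hLf⟩ hmL)
end

section
/- Let K be a centrally symmetric, lattice-free closed convex set in ℝ² with non-empty interior, lattice width w and finite area A. Then A ≥ w²/2. -/
open MeasureTheory

/-!
Translate `K` so that it is symmetric about the origin and let `h` be its support function, so
that the width of `K` in direction `u` is `2 h(u)`. A nonzero integer vector `u` of minimal width
`w = 2m` is primitive, hence part of a lattice basis `u, v`; replacing `v` by `±(v - k u)` we may
assume `0 ≤ v·X ≤ m/2`, where `X ∈ K` maximises `u·x`. Let `Y` and `Z` maximise `v·x` and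
`(v - u)·x`; by minimality these maxima are at least `m`. The centrally symmetric hexagon with
vertices `±X, ±Y, ±Z` lies in `K`, and in the coordinates `(u·x, v·x)` its area is a polynomial in
the six coordinates of `X, Y, Z`, which the constraints above bound below by `2m² = w²/2`.
Cutting the hexagon into a parallelogram and two triangles shows that its area is at most the
volume of `K`.
-/

open Set
open scoped ENNReal Pointwise

section Convex

variable {E : Type*} [AddCommGroup E] [Module ℝ E] {K : Set E}

lemma Convex.smul_add_smul_add_smul_mem (hK : Convex ℝ K) {x y z : E} (hx : x ∈ K) (hy : y ∈ K)
    (hz : z ∈ K) {a b c : ℝ} (ha : 0 ≤ a) (hb : 0 ≤ b) (hc : 0 ≤ c) (habc : a + b + c = 1) :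
    a • x + b • y + c • z ∈ K := by
  have := hK.sum_mem (t := Finset.univ) (w := ![a, b, c]) (z := ![x, y, z])
    (by intro i _; fin_cases i <;> simpa) (by simpa [Fin.sum_univ_three] using habc)
    (by intro i _; fin_cases i <;> simpa)
  simpa [Fin.sum_univ_three, add_assoc] using this

lemma convexHull_triple_subset (hK : Convex ℝ K) {a b c : E} (ha : a ∈ K) (hb : b ∈ K)
    (hc : c ∈ K) : convexHull ℝ {a, b, c} ⊆ K :=
  convexHull_min (by simp only [insert_subset_iff, singleton_subset_iff]; exact ⟨ha, hb, hc⟩) hK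

lemma Convex.smul_add_smul_mem_of_abs_add_abs_le (hK : Convex ℝ K) (hsymm : ∀ x ∈ K, -x ∈ K)
    {p q : E} (hp : p ∈ K) (hq : q ∈ K) {α β : ℝ} (h : |α| + |β| ≤ 1) : α • p + β • q ∈ K := by
  have h0 : (0 : E) ∈ K := ((balanced_iff_neg_mem hK).2 hsymm).zero_mem ⟨p, hp⟩
  have habs (γ : ℝ) {x : E} (hx : x ∈ K) : ∃ x' ∈ K, γ • x = |γ| • x' := by
    rcases abs_choice γ with h | h
    · exact ⟨x, hx, by rw [h]⟩
    · exact ⟨-x, hsymm x hx, by rw [h, neg_smul, smul_neg, neg_neg]⟩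
  obtain ⟨p', hp', hαp⟩ := habs α hp
  obtain ⟨q', hq', hβq⟩ := habs β hq
  have := hK.smul_add_smul_add_smul_mem hp' hq' h0 (abs_nonneg α) (abs_nonneg β)
    (by linarith : 0 ≤ 1 - |α| - |β|) (by ring)
  rwa [smul_zero, add_zero, ← hαp, ← hβq] at this

lemma neg_mem_preimage_add {c : E} (hc : ∀ x ∈ K, (2 : ℝ) • c - x ∈ K) :
    ∀ x ∈ (c + ·) ⁻¹' K, -x ∈ (c + ·) ⁻¹' K := fun x hx => by
  have : (2 : ℝ) • c - (c + x) = c + -x := by module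
  show c + -x ∈ K
  exact this ▸ hc _ hx

lemma Convex.zero_mem_interior_of_neg_mem [TopologicalSpace E] [IsTopologicalAddGroup E]
    [ContinuousSMul ℝ E] (hK : Convex ℝ K) (hsymm : ∀ x ∈ K, -x ∈ K)
    (hne : (interior K).Nonempty) : (0 : E) ∈ interior K := by
  obtain ⟨x, hx⟩ := hne
  refine hK.openSegment_interior_self_subset_interior hx (hsymm x (interior_subset hx))
    ⟨1 / 2, 1 / 2, by norm_num, by norm_num, by norm_num, ?_⟩
  rw [smul_neg, add_neg_cancel]

end Convex

noncomputable def cross (p q : ℝ × ℝ) : ℝ := p.1 * q.2 - p.2 * q.1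

lemma cross_neg_left (p q : ℝ × ℝ) : cross (-p) q = -cross p q := by
  simp only [cross, Prod.fst_neg, Prod.snd_neg]
  ring

lemma cross_neg_right (p q : ℝ × ℝ) : cross p (-q) = -cross p q := by
  simp only [cross, Prod.fst_neg, Prod.snd_neg]
  ring

noncomputable def basisMap (p q : ℝ × ℝ) : (ℝ × ℝ) →ₗ[ℝ] (ℝ × ℝ) :=
  Matrix.toLin (Module.Basis.finTwoProd ℝ) (Module.Basis.finTwoProd ℝ) !![p.1, q.1; p.2, q.2]

lemma basisMap_apply (p q z : ℝ × ℝ) : basisMap p q z = z.1 • p + z.2 • q := by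
  simp only [basisMap, Matrix.toLin_finTwoProd_apply, Prod.ext_iff, Prod.smul_fst, Prod.smul_snd,
    Prod.fst_add, Prod.snd_add, smul_eq_mul]
  constructor <;> ring

lemma volume_image_basisMap (p q : ℝ × ℝ) (s : Set (ℝ × ℝ)) :
    volume (basisMap p q '' s) = ENNReal.ofReal |cross p q| * volume s := by
  rw [Measure.addHaar_image_linearMap, basisMap,
    ← LinearMap.det_toMatrix (Module.Basis.finTwoProd ℝ), LinearMap.toMatrix_toLin,
    Matrix.det_fin_two, cross]
  simp only [Matrix.of_apply, Matrix.cons_val', Matrix.cons_val_zero, Matrix.cons_val_one,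
    Matrix.empty_val', Matrix.cons_val_fin_one]
  ring_nf

lemma volume_regionBetween_zero_one_sub :
    volume (regionBetween (fun _ => 0) (fun x => 1 - x) (Ioo (0 : ℝ) 1)) =
      ENNReal.ofReal (1 / 2) := by
  have hint : IntegrableOn (fun x : ℝ => 1 - x) (Ioo 0 1) :=
    (by fun_prop : Continuous fun x : ℝ => 1 - x).integrableOn_Icc.mono_set Ioo_subset_Icc_self
  rw [Measure.volume_eq_prod, volume_regionBetween_eq_integral integrableOn_zero hint
    measurableSet_Ioo (fun x hx => by simp; linarith [hx.2]), ← integral_Ioc_eq_integral_Ioo,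
    ← intervalIntegral.integral_of_le zero_le_one]
  simp only [Pi.sub_apply, sub_zero]
  rw [intervalIntegral.integral_sub intervalIntegrable_const intervalIntegral.intervalIntegrable_id]
  norm_num

lemma convex_setOf_cross_le (w : ℝ × ℝ) (k : ℝ) : Convex ℝ {x : ℝ × ℝ | cross x w ≤ k} :=
  convex_halfSpace_le ⟨fun x y => by simp only [cross, Prod.fst_add, Prod.snd_add]; ring,
    fun a x => by simp only [cross, Prod.smul_fst, Prod.smul_snd, smul_eq_mul]; ring⟩ k

lemma ofReal_abs_cross_div_two_le_volume_convexHull (a b c : ℝ × ℝ) :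
    ENNReal.ofReal (|cross (b - a) (c - a)| / 2) ≤ volume (convexHull ℝ {a, b, c}) := by
  calc ENNReal.ofReal (|cross (b - a) (c - a)| / 2)
      = volume ((a + ·) '' (basisMap (b - a) (c - a) ''
          regionBetween (fun _ => 0) (fun x => 1 - x) (Ioo (0 : ℝ) 1))) := by
        rw [image_add_left, measure_preimage_add, volume_image_basisMap,
          volume_regionBetween_zero_one_sub,
          ← ENNReal.ofReal_mul (abs_nonneg _), mul_one_div]
    _ ≤ volume (convexHull ℝ {a, b, c}) := by
        refine measure_mono ?_
        rintro _ ⟨_, ⟨⟨s, t⟩, ⟨hs, ht⟩, rfl⟩, rfl⟩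
        simp only [mem_Ioo] at hs ht
        have hmem := (convex_convexHull ℝ {a, b, c}).smul_add_smul_add_smul_mem
          (subset_convexHull ℝ _ (by simp : a ∈ ({a, b, c} : Set _)))
          (subset_convexHull ℝ _ (by simp : b ∈ ({a, b, c} : Set _)))
          (subset_convexHull ℝ _ (by simp : c ∈ ({a, b, c} : Set _)))
          (by linarith : 0 ≤ 1 - s - t) hs.1.le ht.1.le (by ring)
        convert hmem using 1
        simp only [basisMap_apply, smul_sub, sub_smul, one_smul]
        abel

lemma ofReal_mul_dist_le_volume {K : Set (ℝ × ℝ)} (hK : Convex ℝ K) {x₀ y : ℝ × ℝ} {r : ℝ}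
    (hr : 0 ≤ r) (hball : Metric.closedBall x₀ r ⊆ K) (hy : y ∈ K) :
    ENNReal.ofReal (r * dist y x₀) ≤ volume K := by
  have htri (e : ℝ × ℝ) (he : ‖e‖ ≤ r) : ENNReal.ofReal |cross (y - x₀) e| ≤ volume K := by
    have hcross : |cross (x₀ + e - y) (x₀ - e - y)| / 2 = |cross (y - x₀) e| := by
      have : cross (x₀ + e - y) (x₀ - e - y) = 2 * cross (y - x₀) e := by
        simp only [cross, Prod.fst_add, Prod.snd_add, Prod.fst_sub, Prod.snd_sub]
        ring
      rw [this, abs_mul, abs_two]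
      ring
    rw [← hcross]
    refine (ofReal_abs_cross_div_two_le_volume_convexHull y _ _).trans
      (measure_mono (convexHull_triple_subset hK hy (hball ?_) (hball ?_))) <;>
      simpa [dist_eq_norm] using he
  have h₁ : |cross (y - x₀) (r, 0)| = r * |y.2 - x₀.2| := by
    simp [cross, abs_mul, abs_of_nonneg hr, mul_comm]
  have h₂ : |cross (y - x₀) (0, r)| = r * |y.1 - x₀.1| := by
    simp [cross, abs_mul, abs_of_nonneg hr, mul_comm]
  rw [Prod.dist_eq, Real.dist_eq, Real.dist_eq, mul_max_of_nonneg _ _ hr, ENNReal.ofReal_max]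
  exact max_le (h₂ ▸ htri (0, r) (by simp [abs_of_nonneg hr, hr]))
    (h₁ ▸ htri (r, 0) (by simp [abs_of_nonneg hr, hr]))

lemma Convex.isBounded_of_volume_ne_top {K : Set (ℝ × ℝ)} (hK : Convex ℝ K)
    (hne : (interior K).Nonempty) (hfin : volume K ≠ ⊤) : Bornology.IsBounded K := by
  obtain ⟨x₀, hx₀⟩ := hne
  obtain ⟨r, hr, hball⟩ :=
    Metric.nhds_basis_closedBall.mem_iff.1 (mem_interior_iff_mem_nhds.1 hx₀)
  refine (Metric.isBounded_closedBall (x := x₀) (r := (volume K).toReal / r)).subset fun y hy => ?_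
  rw [Metric.mem_closedBall, le_div_iff₀ hr, mul_comm]
  exact (ENNReal.ofReal_le_iff_le_toReal hfin).1 (ofReal_mul_dist_le_volume hK hr.le hball hy)

section Symmetric

variable {L : Set (ℝ × ℝ)}

/-- The parallelogram with vertices `±p, ±q`, taken open so that it is disjoint from the triangles
it is combined with in `ofReal_hexArea_le_volume_of_cross_pos`. -/
noncomputable def openParallelogram (p q : ℝ × ℝ) : Set (ℝ × ℝ) :=
  basisMap (p + q) (p - q) '' Ioo (-(1 / 2) : ℝ) (1 / 2) ×ˢ Ioo (-(1 / 2) : ℝ) (1 / 2)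

lemma volume_openParallelogram (p q : ℝ × ℝ) :
    volume (openParallelogram p q) = ENNReal.ofReal (2 * |cross p q|) := by
  have hcross : cross (p + q) (p - q) = -2 * cross p q := by
    simp only [cross, Prod.fst_add, Prod.snd_add, Prod.fst_sub, Prod.snd_sub]
    ring
  rw [openParallelogram, volume_image_basisMap, Measure.volume_eq_prod, Measure.prod_prod,
    Real.volume_Ioo, hcross, abs_mul]
  norm_num

lemma abs_cross_lt_of_mem_openParallelogram {p q x : ℝ × ℝ} (hpq : cross p q ≠ 0)
    (hx : x ∈ openParallelogram p q) : |cross x (p + q)| < |cross p q| := by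
  obtain ⟨⟨s, t⟩, ⟨-, ht⟩, rfl⟩ := hx
  have hcross : cross (basisMap (p + q) (p - q) (s, t)) (p + q) = (2 * t) * cross p q := by
    simp only [basisMap_apply, cross, Prod.fst_add, Prod.snd_add, Prod.fst_sub, Prod.snd_sub,
      Prod.smul_fst, Prod.smul_snd, smul_eq_mul]
    ring
  rw [hcross, abs_mul]
  have : |2 * t| < 1 := by rw [abs_lt]; constructor <;> linarith [ht.1, ht.2]
  exact mul_lt_of_lt_one_left (abs_pos.2 hpq) this

lemma openParallelogram_subset (hL : Convex ℝ L) (hsymm : ∀ x ∈ L, -x ∈ L)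
    {p q : ℝ × ℝ} (hp : p ∈ L) (hq : q ∈ L) : openParallelogram p q ⊆ L := by
  rintro _ ⟨⟨s, t⟩, ⟨hs, ht⟩, rfl⟩
  have hcomb : basisMap (p + q) (p - q) (s, t) = (s + t) • p + (s - t) • q := by
    simp only [basisMap_apply, smul_add, smul_sub, add_smul, sub_smul]
    abel
  rw [hcomb]
  refine hL.smul_add_smul_mem_of_abs_add_abs_le hsymm hp hq ?_
  rcases abs_cases (s + t) with ⟨h1, _⟩ | ⟨h1, _⟩ <;>
    rcases abs_cases (s - t) with ⟨h2, _⟩ | ⟨h2, _⟩ <;>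
    rw [h1, h2] <;> linarith [hs.1, hs.2, ht.1, ht.2]

lemma ofReal_two_mul_abs_cross_le_volume (hL : Convex ℝ L) (hsymm : ∀ x ∈ L, -x ∈ L)
    {p q : ℝ × ℝ} (hp : p ∈ L) (hq : q ∈ L) :
    ENNReal.ofReal (2 * |cross p q|) ≤ volume L :=
  volume_openParallelogram p q ▸ measure_mono (openParallelogram_subset hL hsymm hp hq)

/-- The area of the hexagon with vertices `p, q, r, -p, -q, -r` when these are in counterclockwise
convex position: twice the sum of the signed areas of the triangles `0 p q`, `0 q r`, `0 r (-p)`. -/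
noncomputable def hexArea (p q r : ℝ × ℝ) : ℝ := cross p q + cross q r - cross r p

/-- The hexagon is the parallelogram with vertices `±p, ±q` together with the triangle `q r (-p)`
and its reflection, which lie on either side of it in the direction transverse to `p + q`. -/
lemma ofReal_hexArea_le_volume_of_cross_pos (hL : Convex ℝ L) (hsymm : ∀ x ∈ L, -x ∈ L)
    {p q r : ℝ × ℝ} (hp : p ∈ L) (hq : q ∈ L) (hr : r ∈ L) (hpq : 0 < cross p q)
    (hqr : 0 < cross (r - q) (-p - q)) : ENNReal.ofReal (hexArea p q r) ≤ volume L := by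
  set P := openParallelogram p q
  set T₁ := convexHull ℝ {q, r, -p}
  set T₂ := convexHull ℝ {-q, -r, p}
  have hT₂_eq : cross (-r - -q) (p - -q) = cross (r - q) (-p - q) := by
    simp only [cross, Prod.fst_sub, Prod.snd_sub, Prod.fst_neg, Prod.snd_neg]
    ring
  have hP : ∀ x ∈ P, |cross x (p + q)| < cross p q := fun x hx =>
    abs_of_pos hpq ▸ abs_cross_lt_of_mem_openParallelogram hpq.ne' hx
  have hqr' := hqr
  simp only [cross, Prod.fst_sub, Prod.snd_sub, Prod.fst_neg, Prod.snd_neg] at hqr'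
  have hT₁ : T₁ ⊆ {x | cross x (p + q) ≤ -cross p q} := by
    refine convexHull_triple_subset (convex_setOf_cross_le _ _) ?_ ?_ ?_ <;>
      simp only [mem_ofPred_eq, cross, Prod.fst_add, Prod.snd_add, Prod.fst_neg, Prod.snd_neg] <;>
      linarith
  have hT₂ : T₂ ⊆ {x | cross x (-(p + q)) ≤ -cross p q} := by
    refine convexHull_triple_subset (convex_setOf_cross_le _ _) ?_ ?_ ?_ <;>
      simp only [mem_ofPred_eq, cross, Prod.fst_add, Prod.snd_add, Prod.fst_neg, Prod.snd_neg] <;>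
      linarith
  have hmeas (a b c : ℝ × ℝ) : MeasurableSet (convexHull ℝ {a, b, c}) :=
    ((toFinite {a, b, c}).isCompact_convexHull ℝ).isClosed.measurableSet
  have hdisj₁ : Disjoint P (T₁ ∪ T₂) := by
    refine disjoint_left.2 fun x hxP hxT => ?_
    have := abs_lt.1 (hP x hxP)
    rcases hxT with hx | hx
    · linarith [show cross x (p + q) ≤ -cross p q from hT₁ hx]
    · linarith [cross_neg_right x (p + q), show cross x (-(p + q)) ≤ -cross p q from hT₂ hx]
  have hdisj₂ : Disjoint T₁ T₂ :=
    disjoint_left.2 fun x hx₁ hx₂ => by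
      linarith [cross_neg_right x (p + q), show cross x (p + q) ≤ -cross p q from hT₁ hx₁,
        show cross x (-(p + q)) ≤ -cross p q from hT₂ hx₂]
  have hsub : P ∪ (T₁ ∪ T₂) ⊆ L := by
    refine union_subset (openParallelogram_subset hL hsymm hp hq) (union_subset ?_ ?_)
    · exact convexHull_triple_subset hL hq hr (hsymm p hp)
    · exact convexHull_triple_subset hL (hsymm q hq) (hsymm r hr) hp
  calc ENNReal.ofReal (hexArea p q r)
      = ENNReal.ofReal (2 * |cross p q|) + (ENNReal.ofReal (|cross (r - q) (-p - q)| / 2) +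
          ENNReal.ofReal (|cross (-r - -q) (p - -q)| / 2)) := by
        rw [hT₂_eq, abs_of_pos hpq, abs_of_pos hqr, ← ENNReal.ofReal_add (by positivity)
          (by positivity), ← ENNReal.ofReal_add (by positivity) (by positivity)]
        congr 1
        simp only [hexArea, cross, Prod.fst_sub, Prod.snd_sub, Prod.fst_neg, Prod.snd_neg]
        ring
    _ ≤ volume P + (volume T₁ + volume T₂) := by
        rw [volume_openParallelogram]
        gcongr <;> exact ofReal_abs_cross_div_two_le_volume_convexHull _ _ _
    _ = volume (P ∪ (T₁ ∪ T₂)) := by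
        rw [measure_union hdisj₁ ((hmeas _ _ _).union (hmeas _ _ _)),
          measure_union hdisj₂ (hmeas _ _ _)]
    _ ≤ volume L := measure_mono hsub

lemma ofReal_hexArea_le_volume (hL : Convex ℝ L) (hsymm : ∀ x ∈ L, -x ∈ L) {p q r : ℝ × ℝ}
    (hp : p ∈ L) (hq : q ∈ L) (hr : r ∈ L) : ENNReal.ofReal (hexArea p q r) ≤ volume L := by
  have hpar {x y : ℝ × ℝ} (hx : x ∈ L) (hy : y ∈ L) (h : hexArea p q r ≤ 2 * |cross x y|) :
      ENNReal.ofReal (hexArea p q r) ≤ volume L :=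
    (ENNReal.ofReal_le_ofReal h).trans (ofReal_two_mul_abs_cross_le_volume hL hsymm hx hy)
  have htri : cross (r - q) (-p - q) = cross q r - cross r p - cross p q := by
    simp only [cross, Prod.fst_sub, Prod.snd_sub, Prod.fst_neg, Prod.snd_neg]
    ring
  -- Unless the triangles `0 p q` and `q r (-p)` are both counterclockwise, the parallelogram
  -- spanned by two of the points is already large enough.
  rcases le_or_gt (cross p q) 0 with hpq | hpq
  · have : hexArea p q r ≤ |cross q r| + |cross r p| := by
      rw [hexArea]
      linarith [le_abs_self (cross q r), neg_abs_le (cross r p)]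
    rcases le_total |cross r p| |cross q r| with h | h
    · exact hpar hq hr (by linarith)
    · exact hpar hr hp (by linarith)
  rcases le_or_gt (cross (r - q) (-p - q)) 0 with hqr | hqr
  · refine hpar hp hq ?_
    rw [abs_of_pos hpq, hexArea]
    linarith
  exact ofReal_hexArea_le_volume_of_cross_pos hL hsymm hp hq hr hpq hqr

end Symmetric

lemma continuous_dot2 (u : ℝ × ℝ) : Continuous (dot2 u) := by
  unfold dot2
  fun_prop

lemma dot2_neg_left (u x : ℝ × ℝ) : dot2 (-u) x = -dot2 u x := by
  simp only [dot2, Prod.fst_neg, Prod.snd_neg]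
  ring

lemma dot2_neg_right (u x : ℝ × ℝ) : dot2 u (-x) = -dot2 u x := by
  simp only [dot2, Prod.fst_neg, Prod.snd_neg]
  ring

noncomputable def supportFn (L : Set (ℝ × ℝ)) (u : ℝ × ℝ) : ℝ := sSup (dot2 u '' L)

section SupportFn

variable {L : Set (ℝ × ℝ)}

lemma IsCompact.dot2_le_supportFn (hL : IsCompact L) (u : ℝ × ℝ) {z : ℝ × ℝ} (hz : z ∈ L) :
    dot2 u z ≤ supportFn L u :=
  le_csSup (hL.image (continuous_dot2 u)).bddAbove (mem_image_of_mem _ hz)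

lemma IsCompact.exists_dot2_eq_supportFn (hL : IsCompact L) (hne : L.Nonempty) (u : ℝ × ℝ) :
    ∃ X ∈ L, dot2 u X = supportFn L u :=
  (hL.image (continuous_dot2 u)).sSup_mem (hne.image _)

lemma supportFn_smul (L : Set (ℝ × ℝ)) {a : ℝ} (ha : 0 ≤ a) (u : ℝ × ℝ) :
    supportFn L (a • u) = a * supportFn L u := by
  have : dot2 (a • u) '' L = a • (dot2 u '' L) := by
    rw [← image_smul, image_image]
    congr! 1 with x
    simp only [dot2, Prod.smul_fst, Prod.smul_snd, smul_eq_mul]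
    ring
  rw [supportFn, supportFn, this, Real.sSup_smul_of_nonneg ha, smul_eq_mul]

lemma IsCompact.mul_abs_add_abs_le_supportFn (hL : IsCompact L) {r : ℝ} (hr : 0 ≤ r)
    (hball : Metric.closedBall 0 r ⊆ L) (u : ℝ × ℝ) :
    r * (|u.1| + |u.2|) ≤ supportFn L u := by
  have hmem : r • ((SignType.sign u.1 : ℝ), (SignType.sign u.2 : ℝ)) ∈ L := by
    have hsign (x : ℝ) : |(SignType.sign x : ℝ)| ≤ 1 := by
      rcases lt_trichotomy x 0 with h | h | h <;> simp [h]
    refine hball (mem_closedBall_zero_iff.2 ?_)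
    rw [norm_smul, Real.norm_eq_abs, abs_of_nonneg hr, Prod.norm_def]
    exact mul_le_of_le_one_right hr (max_le (hsign u.1) (hsign u.2))
  convert hL.dot2_le_supportFn u hmem using 1
  simp only [dot2, Prod.smul_fst, Prod.smul_snd, smul_eq_mul, ← self_mul_sign]
  ring

lemma IsCompact.abs_dot2_le_supportFn (hL : IsCompact L) (hsymm : ∀ x ∈ L, -x ∈ L)
    (u : ℝ × ℝ) {z : ℝ × ℝ} (hz : z ∈ L) : |dot2 u z| ≤ supportFn L u := by
  refine abs_le.2 ⟨?_, hL.dot2_le_supportFn u hz⟩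
  linarith [dot2_neg_right u z, hL.dot2_le_supportFn u (hsymm z hz)]

lemma widthFn_eq_two_mul_supportFn {K : Set (ℝ × ℝ)} (hK : IsCompact K) (hne : K.Nonempty)
    {c : ℝ × ℝ} (hc : ∀ x ∈ K, (2 : ℝ) • c - x ∈ K) (u : ℝ × ℝ) :
    widthFn K u = 2 * supportFn ((c + ·) ⁻¹' K) u := by
  have hL : IsCompact ((c + ·) ⁻¹' K) := (Homeomorph.addLeft c).isCompact_preimage.2 hK
  obtain ⟨x, hxK⟩ := hne
  obtain ⟨X, hX, hXmax⟩ := hL.exists_dot2_eq_supportFn ⟨x - c, by simpa using hxK⟩ u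
  have hle (y : ℝ × ℝ) (hy : y ∈ K) : dot2 u (y - c) ≤ dot2 u X :=
    hXmax ▸ hL.dot2_le_supportFn u (by simpa using hy)
  have hsup : IsGreatest (dot2 u '' K) (dot2 u (c + X)) := by
    refine ⟨mem_image_of_mem _ hX, ?_⟩
    rintro _ ⟨y, hy, rfl⟩
    have := hle y hy
    simp only [dot2, Prod.fst_add, Prod.snd_add, Prod.fst_sub, Prod.snd_sub] at this ⊢
    linarith
  have hinf : IsLeast (dot2 u '' K) (dot2 u (c - X)) := by
    refine ⟨⟨(2 : ℝ) • c - (c + X), hc _ hX, ?_⟩, ?_⟩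
    · congr 1
      module
    rintro _ ⟨y, hy, rfl⟩
    have := hle _ (hc y hy)
    simp only [dot2, Prod.fst_sub, Prod.snd_sub, Prod.smul_fst, Prod.smul_snd,
      smul_eq_mul] at this ⊢
    linarith
  rw [widthFn, hsup.csSup_eq, hinf.csInf_eq, ← hXmax]
  simp only [dot2, Prod.fst_add, Prod.snd_add, Prod.fst_sub, Prod.snd_sub]
  ring

end SupportFn

def castVec (u : ℤ × ℤ) : ℝ × ℝ := ((u.1 : ℝ), (u.2 : ℝ))

@[simp] lemma castVec_fst (u : ℤ × ℤ) : (castVec u).1 = u.1 := rfl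

@[simp] lemma castVec_snd (u : ℤ × ℤ) : (castVec u).2 = u.2 := rfl

@[simp] lemma castVec_neg (u : ℤ × ℤ) : castVec (-u) = -castVec u := by ext <;> simp

@[simp] lemma castVec_sub (u v : ℤ × ℤ) : castVec (u - v) = castVec u - castVec v := by
  ext <;> simp

@[simp] lemma castVec_smul (g : ℤ) (u : ℤ × ℤ) : castVec (g • u) = (g : ℝ) • castVec u := by
  ext <;> simp

lemma exists_ne_zero_forall_ne_zero_le (f : ℤ × ℤ → ℝ) {r : ℝ} (hr : 0 < r)
    (hf : ∀ w, r * ((|w.1| + |w.2| : ℤ) : ℝ) ≤ f w) : ∃ u ≠ 0, ∀ w ≠ 0, f u ≤ f w := by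
  set e : ℤ × ℤ := (1, 0)
  have he : e ≠ 0 := by simp [e]
  set N : ℤ := ⌈f e / r⌉
  have hfin : {w : ℤ × ℤ | w ≠ 0 ∧ f w ≤ f e}.Finite := by
    refine (Set.finite_Icc (-N, -N) (N, N)).subset fun w hw => ?_
    have hbound : ((|w.1| + |w.2| : ℤ) : ℝ) ≤ N :=
      ((le_div_iff₀' hr).2 ((hf w).trans hw.2)).trans (Int.le_ceil _)
    have hbound' : |w.1| + |w.2| ≤ N := by exact_mod_cast hbound
    have h1 := abs_le.1 (show |w.1| ≤ N by linarith [abs_nonneg w.2])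
    have h2 := abs_le.1 (show |w.2| ≤ N by linarith [abs_nonneg w.1])
    exact ⟨⟨h1.1, h2.1⟩, ⟨h1.2, h2.2⟩⟩
  obtain ⟨u, ⟨hu, hue⟩, hmin⟩ := Set.exists_min_image _ f hfin ⟨e, he, le_rfl⟩
  refine ⟨u, hu, fun w hw => ?_⟩
  by_cases hwe : f w ≤ f e
  · exact hmin w ⟨hw, hwe⟩
  · exact hue.trans (not_le.1 hwe).le

lemma gcd_eq_one_of_forall_ne_zero_le (f : ℤ × ℤ → ℝ) (hpos : ∀ w ≠ 0, 0 < f w)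
    (hsmul : ∀ (g : ℤ) (w : ℤ × ℤ), 0 < g → f (g • w) = g * f w) {u : ℤ × ℤ} (hu : u ≠ 0)
    (hmin : ∀ w ≠ 0, f u ≤ f w) : Int.gcd u.1 u.2 = 1 := by
  set g : ℤ := (Int.gcd u.1 u.2 : ℤ)
  have hg : 0 < g := by
    refine Int.natCast_pos.2 (Int.gcd_pos_iff.2 ?_)
    by_contra! h
    exact hu (Prod.ext h.1 h.2)
  set w : ℤ × ℤ := (u.1 / g, u.2 / g)
  have hgw : g • w = u :=
    Prod.ext (Int.mul_ediv_cancel' (Int.gcd_dvd_left _ _))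
      (Int.mul_ediv_cancel' (Int.gcd_dvd_right _ _))
  have hw : w ≠ 0 := by
    rintro h
    rw [h, smul_zero] at hgw
    exact hu hgw.symm
  have hle := hmin w hw
  rw [← hgw, hsmul g w hg] at hle
  have : (g : ℝ) ≤ 1 := (mul_le_iff_le_one_left (hpos w hw)).1 hle
  have : g ≤ 1 := by exact_mod_cast this
  omega

lemma exists_abs_cross_eq_one_and_dot2_mem_Icc {u : ℤ × ℤ} (hu : Int.gcd u.1 u.2 = 1)
    {X : ℝ × ℝ} (hX : 0 < dot2 (castVec u) X) : ∃ v : ℤ × ℤ, |cross (castVec v) (castVec u)| = 1 ∧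
      dot2 (castVec v) X ∈ Icc 0 (dot2 (castVec u) X / 2) := by
  obtain ⟨a, b, hab⟩ := Int.isCoprime_iff_gcd_eq_one.2 hu
  set m := dot2 (castVec u) X
  set v₀ : ℤ × ℤ := (b, -a)
  set v := v₀ - round (dot2 (castVec v₀) X / m) • u
  have hcross : cross (castVec v) (castVec u) = 1 := by
    have : ((a * u.1 + b * u.2 : ℤ) : ℝ) = 1 := by exact_mod_cast hab
    simp only [cross, v, v₀, castVec_sub, castVec_smul, Prod.fst_sub, Prod.snd_sub, Prod.smul_fst,
      Prod.smul_snd, castVec_fst, castVec_snd, smul_eq_mul] at this ⊢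
    push_cast at this ⊢
    linear_combination this
  have habs : |dot2 (castVec v) X| ≤ m / 2 := by
    set k : ℝ := ((round (dot2 (castVec v₀) X / m) : ℤ) : ℝ)
    have hdot : dot2 (castVec v) X = m * (dot2 (castVec v₀) X / m - k) := by
      rw [mul_sub, mul_div_cancel₀ _ hX.ne']
      simp only [v, m, k, castVec_sub, castVec_smul, dot2, Prod.fst_sub, Prod.snd_sub,
        Prod.smul_fst, Prod.smul_snd, smul_eq_mul]
      ring
    rw [hdot, abs_mul, abs_of_pos hX]
    linarith [mul_le_mul_of_nonneg_left (abs_sub_round (dot2 (castVec v₀) X / m)) hX.le]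
  rcases le_total 0 (dot2 (castVec v) X) with h | h
  · exact ⟨v, by rw [hcross, abs_one], h, (abs_le.1 habs).2⟩
  · refine ⟨-v, ?_, ?_, ?_⟩ <;> simp only [castVec_neg, cross_neg_left, dot2_neg_left, abs_neg]
    · rw [hcross, abs_one]
    · linarith
    · linarith [neg_abs_le (dot2 (castVec v) X)]

lemma two_mul_sq_le_of_bounds {m h a b s t : ℝ} (hm : 0 < m) (hh : m ≤ h) (ha₀ : 0 ≤ a)
    (ha₁ : a ≤ m / 2) (hb : |b| ≤ m) (ht : |t| ≤ m) (hs : |s| ≤ h) (hst : m ≤ s - t)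
    (hst' : h - b ≤ s - t) :
    2 * m ^ 2 ≤ (s * b - t * h) + (h * m - a * b) - (a * t - m * s) := by
  obtain ⟨hb₀, hb₁⟩ := abs_le.1 hb
  obtain ⟨ht₀, ht₁⟩ := abs_le.1 ht
  obtain ⟨hs₀, hs₁⟩ := abs_le.1 hs
  nlinarith [mul_nonneg (sub_nonneg.2 hst) (by linarith : 0 ≤ b + m),
    mul_nonneg (sub_nonneg.2 hst) (by linarith : 0 ≤ m - b),
    mul_nonneg ha₀ (by linarith : 0 ≤ m - b),
    mul_nonneg (by linarith : 0 ≤ m / 2 - a) (by linarith : 0 ≤ m - b),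
    mul_nonneg (by linarith : 0 ≤ m / 2 - a) (by linarith : 0 ≤ t + m),
    mul_nonneg (by linarith : 0 ≤ h - m) (by linarith : 0 ≤ m - t),
    mul_nonneg (sub_nonneg.2 hst') (by linarith : 0 ≤ t + m)]

lemma ofReal_two_mul_sq_supportFn_le_volume {L : Set (ℝ × ℝ)} (hLc : IsCompact L) (hL : Convex ℝ L)
    (hsymm : ∀ x ∈ L, -x ∈ L) {u v X : ℝ × ℝ} (hX : X ∈ L) (huX : dot2 u X = supportFn L u)
    (hm : 0 < supportFn L u) (hvX : dot2 v X ∈ Icc 0 (supportFn L u / 2))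
    (hv : supportFn L u ≤ supportFn L v) (hvu : supportFn L u ≤ supportFn L (v - u)) :
    ENNReal.ofReal (2 * supportFn L u ^ 2) ≤ ENNReal.ofReal |cross v u| * volume L := by
  obtain ⟨Y, hY, hvY⟩ := hLc.exists_dot2_eq_supportFn ⟨X, hX⟩ v
  obtain ⟨Z, hZ, hvuZ⟩ := hLc.exists_dot2_eq_supportFn ⟨X, hX⟩ (v - u)
  have hsub (x : ℝ × ℝ) : dot2 (v - u) x = dot2 v x - dot2 u x := by
    simp only [dot2, Prod.fst_sub, Prod.snd_sub]
    ring
  have habs := hLc.abs_dot2_le_supportFn hsymm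
  have hF := two_mul_sq_le_of_bounds (m := dot2 u X) (h := dot2 v Y) (a := dot2 v X)
    (b := dot2 u Y) (s := dot2 v Z) (t := dot2 u Z) (by rwa [huX]) (by rwa [huX, hvY]) hvX.1
    (by rw [huX]; exact hvX.2) (huX ▸ habs u hY) (huX ▸ habs u hZ) (hvY ▸ habs v hZ)
    (by rw [huX, ← hsub, hvuZ]; exact hvu)
    (by rw [← hsub, ← hsub, hvuZ]; exact hLc.dot2_le_supportFn (v - u) hY)
  have hhex : cross v u * hexArea Z Y X =
      (dot2 v Z * dot2 u Y - dot2 u Z * dot2 v Y) + (dot2 v Y * dot2 u X - dot2 v X * dot2 u Y) -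
        (dot2 v X * dot2 u Z - dot2 u X * dot2 v Z) := by
    simp only [hexArea, cross, dot2]
    ring
  have hrev : hexArea X Y Z = -hexArea Z Y X := by
    simp only [hexArea, cross]
    ring
  rw [← hhex, huX] at hF
  obtain ⟨p, q, r, hp, hq, hr, hpqr⟩ : ∃ p q r, p ∈ L ∧ q ∈ L ∧ r ∈ L ∧
      2 * supportFn L u ^ 2 ≤ |cross v u| * hexArea p q r := by
    rcases le_total 0 (cross v u) with hc | hc
    · exact ⟨Z, Y, X, hZ, hY, hX, by rwa [abs_of_nonneg hc]⟩
    · exact ⟨X, Y, Z, hX, hY, hZ, by rwa [abs_of_nonpos hc, hrev, neg_mul_neg]⟩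
  calc ENNReal.ofReal (2 * supportFn L u ^ 2)
      ≤ ENNReal.ofReal (|cross v u| * hexArea p q r) := ENNReal.ofReal_le_ofReal hpqr
    _ = ENNReal.ofReal |cross v u| * ENNReal.ofReal (hexArea p q r) :=
        ENNReal.ofReal_mul (abs_nonneg _)
    _ ≤ ENNReal.ofReal |cross v u| * volume L := by
        gcongr
        exact ofReal_hexArea_le_volume hL hsymm hp hq hr

lemma exists_ofReal_two_mul_sq_supportFn_le_volume {L : Set (ℝ × ℝ)} (hLc : IsCompact L)
    (hL : Convex ℝ L) (hsymm : ∀ x ∈ L, -x ∈ L) {r : ℝ} (hr : 0 < r)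
    (hball : Metric.closedBall 0 r ⊆ L) :
    ∃ u : ℤ × ℤ, u ≠ 0 ∧ (∀ w ≠ 0, supportFn L (castVec u) ≤ supportFn L (castVec w)) ∧
      ENNReal.ofReal (2 * supportFn L (castVec u) ^ 2) ≤ volume L := by
  set f : ℤ × ℤ → ℝ := fun w => supportFn L (castVec w)
  have hf (w : ℤ × ℤ) : r * ((|w.1| + |w.2| : ℤ) : ℝ) ≤ f w := by
    simpa using hLc.mul_abs_add_abs_le_supportFn hr.le hball (castVec w)
  have hpos (w : ℤ × ℤ) (hw : w ≠ 0) : 0 < f w := by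
    have hw' : 0 < |w.1| + |w.2| := by
      by_contra! h
      exact hw (Prod.ext (abs_nonpos_iff.1 (by linarith [abs_nonneg w.2]))
        (abs_nonpos_iff.1 (by linarith [abs_nonneg w.1])))
    exact (mul_pos hr (Int.cast_pos.2 hw')).trans_le (hf w)
  have hsmul (g : ℤ) (w : ℤ × ℤ) (hg : 0 < g) : f (g • w) = g * f w := by
    simp only [f, castVec_smul, supportFn_smul L (Int.cast_nonneg hg.le)]
  obtain ⟨u, hu, hmin⟩ := exists_ne_zero_forall_ne_zero_le f hr hf
  refine ⟨u, hu, hmin, ?_⟩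
  obtain ⟨X, hX, huX⟩ := hLc.exists_dot2_eq_supportFn ⟨0, hball (Metric.mem_closedBall_self hr.le)⟩
    (castVec u)
  obtain ⟨v, hvu, hvX⟩ :=
    exists_abs_cross_eq_one_and_dot2_mem_Icc (gcd_eq_one_of_forall_ne_zero_le f hpos hsmul hu hmin)
      (by rw [huX]; exact hpos u hu)
  have hv : v ≠ 0 := by
    rintro rfl
    simp [cross] at hvu
  have hvu' : v - u ≠ 0 := by
    rw [sub_ne_zero]
    rintro rfl
    simp [cross, mul_comm] at hvu
  have := ofReal_two_mul_sq_supportFn_le_volume hLc hL hsymm hX huX (hpos u hu)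
    (huX ▸ hvX) (hmin v hv) (castVec_sub v u ▸ hmin _ hvu')
  rwa [hvu, ENNReal.ofReal_one, one_mul] at this

theorem sym_area_lower_general (K : Set (ℝ × ℝ)) (hK : IsClosed K) (hconv : Convex ℝ K)
    (hne : (interior K).Nonempty) (hsym : CentrallySymmetric K)
    (hfin : MeasureTheory.volume K ≠ ⊤) :
    latticeWidth K ^ 2 / 2 ≤ (MeasureTheory.volume K).toReal := by
  obtain ⟨c, hc⟩ := hsym
  have hKc : IsCompact K :=
    Metric.isCompact_of_isClosed_isBounded hK (hconv.isBounded_of_volume_ne_top hne hfin)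
  set L := (c + ·) ⁻¹' K
  have hLc : IsCompact L := (Homeomorph.addLeft c).isCompact_preimage.2 hKc
  have hL : Convex ℝ L := hconv.translate_preimage_right c
  have hsymm : ∀ x ∈ L, -x ∈ L := neg_mem_preimage_add fun x => (hc x).1
  have hLint : (interior L).Nonempty := by
    rw [show L = Homeomorph.addLeft c ⁻¹' K from rfl, ← Homeomorph.preimage_interior]
    exact hne.preimage (Homeomorph.addLeft c).surjective
  obtain ⟨r, hr, hball⟩ := Metric.nhds_basis_closedBall.mem_iff.1
    (mem_interior_iff_mem_nhds.1 (hL.zero_mem_interior_of_neg_mem hsymm hLint))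
  obtain ⟨u, hu, hmin, hvol⟩ := exists_ofReal_two_mul_sq_supportFn_le_volume hLc hL hsymm hr hball
  have hwidth := widthFn_eq_two_mul_supportFn hKc (hne.mono interior_subset) fun x => (hc x).1
  have hlw : latticeWidth K = 2 * supportFn L (castVec u) := by
    refine IsLeast.csInf_eq ⟨⟨u, hu, (hwidth (castVec u)).symm⟩, ?_⟩
    rintro _ ⟨w, hw, rfl⟩
    rw [hwidth]
    exact mul_le_mul_of_nonneg_left (hmin w hw) zero_le_two
  calc latticeWidth K ^ 2 / 2 = 2 * supportFn L (castVec u) ^ 2 := by rw [hlw]; ring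
    _ ≤ (volume K).toReal :=
      (ENNReal.ofReal_le_iff_le_toReal hfin).1 (hvol.trans_eq (measure_preimage_add _ _ _))

theorem sym_area_lower (K : Set (ℝ × ℝ)) (hK : IsClosed K) (hconv : Convex ℝ K)
    (hne : (interior K).Nonempty) (hsym : CentrallySymmetric K) (hfree : LatticeFree K)
    (hfin : MeasureTheory.volume K ≠ ⊤) :
    latticeWidth K ^ 2 / 2 ≤ (MeasureTheory.volume K).toReal :=
  sym_area_lower_general K hK hconv hne hsym hfin
end

section
/- Let P be a parallelogram in ℝ² symmetric in the origin such that the translates P + z, z ∈ ℤ², tile ℝ² (their interiors are pairwise disjoint and their union is ℝ²). Then there exists a linear unimodular transformation U and a real number 0 ≤ α < 1 such that U(P) = (1/2)·conv{±(−α−1, 1), ±(−α+1, 1)}. -/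
open MeasureTheory Pointwise

/-!
In the coordinates `(s, h)` of `x = s • a + h • b` the parallelogram is the square `[-1, 1]²`, and
`ℤ²` becomes a lattice `Λ` whose translates of that square tile the plane. Covering and
discreteness give points `e = (2, σ)` and `f = (τ, 2)` of `Λ` with `|σ|, |τ| ≤ 1`; packing forces
them to span `Λ`, and unless `σ = 0` or `τ = 0` either `e ± f` is too short or the centre
`(e + f) / 2` is not covered. So the tiling consists of rows (or columns) of squares, and the
unimodular map with `e ↦ (1, 0)`, `f ↦ (⌊τ / 2⌋, 1)` carries the parallelogram to the normal form
with `α = fract (τ / 2)`.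
-/

open Set

/-- The squares `(G z, H z) + [-1, 1]²`, `z ∈ M`, tile the plane. -/
structure IsSquareTiling {M : Type*} [AddCommGroup M] (G H : M →+ ℝ) : Prop where
  eq_zero_of_abs_lt_two : ∀ z, |G z| < 2 → |H z| < 2 → z = 0
  exists_abs_sub_le_one : ∀ x y : ℝ, ∃ z, |x - G z| ≤ 1 ∧ |y - H z| ≤ 1

theorem abs_two_mul_add_mul_lt_two {x y t : ℝ} (hx : |x| ≤ 1 / 2) (hy : |y| ≤ 1 / 2)
    (ht : |t| ≤ 1) : |2 * x + t * y| < 2 :=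
  calc |2 * x + t * y| ≤ 2 * |x| + |t| * |y| := by
        simpa only [abs_mul, abs_two] using abs_add_le (2 * x) (t * y)
    _ ≤ 2 * (1 / 2) + 1 * (1 / 2) := by gcongr
    _ < 2 := by norm_num

theorem one_lt_abs_add_mul {u v s : ℝ} (hv : 1 ≤ |v|) (h : 0 < u * v * s) :
    1 < |v + u * s| := by
  have : |v| < |v + u * s| := sq_lt_sq.1 (by nlinarith [sq_nonneg (u * s)])
  linarith

namespace IsSquareTiling

variable {M : Type*} [AddCommGroup M] {G H : M →+ ℝ}

theorem swap (T : IsSquareTiling G H) : IsSquareTiling H G where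
  eq_zero_of_abs_lt_two z hH hG := T.eq_zero_of_abs_lt_two z hG hH
  exists_abs_sub_le_one x y := (T.exists_abs_sub_le_one y x).imp fun _ h => h.symm

/-- Pigeonhole: two lattice points in the same `2 × 2` cell would differ by a short vector. -/
theorem finite_setOf_abs_le (T : IsSquareTiling G H) (r : ℝ) :
    {z | |G z| ≤ r ∧ |H z| ≤ r}.Finite := by
  let cell : M → ℤ × ℤ := fun z => (⌊G z / 2⌋, ⌊H z / 2⌋)
  have hcell : cell.Injective := by
    intro z w hzw
    obtain ⟨hG, hH⟩ := Prod.mk.inj hzw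
    replace hG := Int.abs_sub_lt_one_of_floor_eq_floor hG
    replace hH := Int.abs_sub_lt_one_of_floor_eq_floor hH
    refine sub_eq_zero.1 (T.eq_zero_of_abs_lt_two _ ?_ ?_) <;>
      rw [map_sub, abs_sub_lt_iff] <;> rw [abs_sub_lt_iff] at hG hH <;>
      constructor <;> linarith
  refine ((finite_Icc (⌊-r / 2⌋, ⌊-r / 2⌋) (⌊r / 2⌋, ⌊r / 2⌋)).preimage hcell.injOn).subset ?_
  rintro z ⟨hG, hH⟩
  rw [abs_le] at hG hH
  exact ⟨⟨Int.floor_mono (by linarith), Int.floor_mono (by linarith)⟩,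
    Int.floor_mono (by linarith), Int.floor_mono (by linarith)⟩

theorem exists_two_le_of_one_lt (T : IsSquareTiling G H) {x : ℝ} (hx : 1 < x) :
    ∃ z, 2 ≤ G z ∧ G z ≤ x + 1 ∧ |H z| ≤ 1 := by
  obtain ⟨z, hGz, hHz⟩ := T.exists_abs_sub_le_one x 0
  rw [zero_sub, abs_neg] at hHz
  rw [abs_le] at hGz
  have hz : z ≠ 0 := by
    rintro rfl
    rw [map_zero] at hGz
    linarith
  have h2 : 2 ≤ |G z| := not_lt.1 fun h => hz (T.eq_zero_of_abs_lt_two z h (by linarith))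
  refine ⟨z, ?_, by linarith, hHz⟩
  rcases le_abs'.1 h2 with h | h <;> linarith

theorem exists_eq_two (T : IsSquareTiling G H) : ∃ e, G e = 2 ∧ |H e| ≤ 1 := by
  let S := {z | 2 ≤ G z ∧ G z ≤ 4 ∧ |H z| ≤ 1}
  have hS : S.Finite := (T.finite_setOf_abs_le 4).subset fun z ⟨h2, h4, hH⟩ =>
    ⟨abs_le.2 ⟨by linarith, h4⟩, by linarith⟩
  obtain ⟨z₀, h₀⟩ := T.exists_two_le_of_one_lt (x := 3) (by norm_num)
  obtain ⟨e, ⟨he2, he4, hHe⟩, hmin⟩ := S.exists_min_image G hS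
    ⟨z₀, h₀.1, by linarith [h₀.2.1], h₀.2.2⟩
  refine ⟨e, le_antisymm (not_lt.1 fun he => ?_) he2, hHe⟩
  obtain ⟨z, hz2, hzle, hHz⟩ := T.exists_two_le_of_one_lt (x := G e / 2) (by linarith)
  linarith [hmin z ⟨hz2, by linarith, hHz⟩]

theorem span_eq_top (T : IsSquareTiling G H) {e f : M} (he : G e = 2) (hHe : |H e| ≤ 1)
    (hf : H f = 2) (hGf : |G f| ≤ 1) : Submodule.span ℤ {e, f} = ⊤ := by
  refine Submodule.eq_top_iff'.2 fun z => Submodule.mem_span_pair.2 ?_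
  set s := H e
  set t := G f
  have hdet : 0 < 4 - s * t := by
    have : |s * t| ≤ 1 := by rw [abs_mul]; nlinarith [abs_nonneg s, abs_nonneg t]
    linarith [le_abs_self (s * t)]
  set c₁ := (2 * G z - t * H z) / (4 - s * t)
  set c₂ := (2 * H z - s * G z) / (4 - s * t)
  have hc₁ : 2 * c₁ + t * c₂ = G z := by
    rw [mul_div_assoc', mul_div_assoc', ← add_div, div_eq_iff hdet.ne']; ring
  have hc₂ : s * c₁ + 2 * c₂ = H z := by
    rw [mul_div_assoc', mul_div_assoc', ← add_div, div_eq_iff hdet.ne']; ring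
  refine ⟨round c₁, round c₂, (sub_eq_zero.1 (T.eq_zero_of_abs_lt_two _ ?_ ?_)).symm⟩
  · have : G (z - (round c₁ • e + round c₂ • f)) =
        2 * (c₁ - round c₁) + t * (c₂ - round c₂) := by
      simp only [map_sub, map_add, map_zsmul, zsmul_eq_mul, he]
      linarith
    rw [this]
    exact abs_two_mul_add_mul_lt_two (abs_sub_round c₁) (abs_sub_round c₂) hGf
  · have : H (z - (round c₁ • e + round c₂ • f)) =
        2 * (c₂ - round c₂) + s * (c₁ - round c₁) := by
      simp only [map_sub, map_add, map_zsmul, zsmul_eq_mul, hf]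
      linarith
    rw [this]
    exact abs_two_mul_add_mul_lt_two (abs_sub_round c₂) (abs_sub_round c₁) hHe

/-- If `H e > 0 > G f`, the point `(e + f) / 2` is covered by no square: for a lattice point
`m e + n f`, with `u = 2m - 1` and `v = 2n - 1`, the two distances are `|u + v G f / 2|` and
`|v + u H e / 2|`, and in one of them both terms have the same sign. -/
theorem false_of_pos_of_neg (T : IsSquareTiling G H) {e f : M}
    (hspan : Submodule.span ℤ {e, f} = ⊤) (he : G e = 2) (hf : H f = 2) (hs : 0 < H e)
    (ht : G f < 0) : False := by
  obtain ⟨z, hGz, hHz⟩ := T.exists_abs_sub_le_one (1 + G f / 2) (1 + H e / 2)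
  obtain ⟨m, n, rfl⟩ := Submodule.mem_span_pair.1 (hspan ▸ Submodule.mem_top (x := z))
  simp only [map_add, map_zsmul, zsmul_eq_mul, he, hf] at hGz hHz
  rw [show 1 + G f / 2 - (m * 2 + n * G f) = -((2 * m - 1) + (2 * n - 1) * (G f / 2)) by ring,
    abs_neg] at hGz
  rw [show 1 + H e / 2 - (m * H e + n * 2) = -((2 * n - 1) + (2 * m - 1) * (H e / 2)) by ring,
    abs_neg] at hHz
  have hu : 1 ≤ |(2 * m - 1 : ℝ)| := by exact_mod_cast Int.one_le_abs (by omega)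
  have hv : 1 ≤ |(2 * n - 1 : ℝ)| := by exact_mod_cast Int.one_le_abs (by omega)
  rcases lt_trichotomy ((2 * m - 1 : ℝ) * (2 * n - 1)) 0 with huv | huv | huv
  · have := one_lt_abs_add_mul hu (s := G f / 2) (u := 2 * n - 1)
      (by rw [mul_comm (2 * (n : ℝ) - 1)]; exact mul_pos_of_neg_of_neg huv (by linarith))
    linarith
  · exact mul_ne_zero (abs_pos.1 (by linarith)) (abs_pos.1 (by linarith)) huv
  · have := one_lt_abs_add_mul hv (s := H e / 2) (u := 2 * m - 1) (mul_pos huv (by linarith))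
    linarith

theorem eq_zero_or_eq_zero (T : IsSquareTiling G H) {e f : M}
    (hspan : Submodule.span ℤ {e, f} = ⊤) (he : G e = 2) (hHe : |H e| ≤ 1) (hf : H f = 2)
    (hGf : |G f| ≤ 1) : H e = 0 ∨ G f = 0 := by
  rw [abs_le] at hHe hGf
  by_contra! ⟨hs, ht⟩
  rcases hs.lt_or_gt with hs | hs <;> rcases ht.lt_or_gt with ht | ht
  · have h0 := T.eq_zero_of_abs_lt_two (e + f)
      (by rw [map_add, he, abs_lt]; constructor <;> linarith)
      (by rw [map_add, hf, abs_lt]; constructor <;> linarith)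
    have := congrArg G h0
    rw [map_add, he, map_zero] at this
    linarith
  · exact T.swap.false_of_pos_of_neg (Set.pair_comm e f ▸ hspan) hf he ht hs
  · exact T.false_of_pos_of_neg hspan he hf hs ht
  · have h0 := T.eq_zero_of_abs_lt_two (e - f)
      (by rw [map_sub, he, abs_lt]; constructor <;> linarith)
      (by rw [map_sub, hf, abs_lt]; constructor <;> linarith)
    have := congrArg G h0
    rw [map_sub, he, map_zero] at this
    linarith

theorem exists_span_eq_top (T : IsSquareTiling G H) :
    ∃ e f : M, Submodule.span ℤ {e, f} = ⊤ ∧ G e = 2 ∧ H f = 2 ∧ (H e = 0 ∨ G f = 0) := by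
  obtain ⟨e, he, hHe⟩ := T.exists_eq_two
  obtain ⟨f, hf, hGf⟩ := T.swap.exists_eq_two
  have hspan := T.span_eq_top he hHe hf hGf
  exact ⟨e, f, hspan, he, hf, T.eq_zero_or_eq_zero hspan he hHe hf hGf⟩

end IsSquareTiling

theorem parallelogram_vertices_comm {E : Type*} [AddCommGroup E] (a b : E) :
    ({a + b, a - b, -a + b, -a - b} : Set E) = {b + a, b - a, -b + a, -b - a} := by
  rw [add_comm b a, show b - a = -a + b by abel, show -b + a = a - b by abel,
    show -b - a = -a - b by abel, insert_comm (-a + b) (a - b)]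

section Parallelogram

variable {E : Type*} [AddCommGroup E] [Module ℝ E]

def parallelogramMap (a b : E) : ℝ × ℝ →ₗ[ℝ] E :=
  (LinearMap.fst ℝ ℝ ℝ).smulRight a + (LinearMap.snd ℝ ℝ ℝ).smulRight b

@[simp]
theorem parallelogramMap_apply (a b : E) (x : ℝ × ℝ) :
    parallelogramMap a b x = x.1 • a + x.2 • b := rfl

theorem parallelogramMap_injective {a b : E} (hab : LinearIndependent ℝ ![a, b]) :
    Function.Injective (parallelogramMap a b) := by
  refine (injective_iff_map_eq_zero _).2 fun x hx => ?_
  obtain ⟨h1, h2⟩ := LinearIndependent.pair_iff.1 hab x.1 x.2 hx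
  exact Prod.ext h1 h2

theorem convexHull_parallelogram (a b : E) :
    convexHull ℝ {a + b, a - b, -a + b, -a - b} =
      parallelogramMap a b '' (Icc (-1) 1 ×ˢ Icc (-1) 1) := by
  have hvert : ({a + b, a - b, -a + b, -a - b} : Set E) =
      parallelogramMap a b '' ({1, -1} ×ˢ {1, -1}) := by
    ext x
    simp only [insert_prod, singleton_prod, image_insert_eq, image_union, image_singleton,
      mem_insert_iff, mem_union, mem_singleton_iff, parallelogramMap_apply, one_smul, neg_smul,
      sub_eq_add_neg]
    tauto
  rw [hvert, ← LinearMap.image_convexHull, convexHull_prod, convexHull_pair, segment_eq_Icc']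
  norm_num

theorem image_convexHull_parallelogram {F : Type*} [AddCommGroup F] [Module ℝ F]
    (φ : E →ₗ[ℝ] F) (a b : E) :
    φ '' convexHull ℝ {a + b, a - b, -a + b, -a - b} =
      convexHull ℝ {φ a + φ b, φ a - φ b, -φ a + φ b, -φ a - φ b} := by
  simp [LinearMap.image_convexHull, image_insert_eq]

end Parallelogram

theorem exists_isSquareTiling {M : Type*} [AddCommGroup M] (ι : M →+ ℝ × ℝ) {a b : ℝ × ℝ}
    (hab : LinearIndependent ℝ ![a, b])
    (hdisj : ∀ z z' : M, z ≠ z' →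
      interior ((fun x => x + ι z) '' convexHull ℝ {a + b, a - b, -a + b, -a - b}) ∩
        interior ((fun x => x + ι z') '' convexHull ℝ {a + b, a - b, -a + b, -a - b}) = ∅)
    (hcover : ⋃ z : M, (fun x => x + ι z) '' convexHull ℝ {a + b, a - b, -a + b, -a - b} =
      univ) :
    ∃ G H : M →+ ℝ, IsSquareTiling G H ∧ ∀ z, ι z = G z • a + H z • b := by
  let L := LinearEquiv.ofInjectiveEndo _ (parallelogramMap_injective hab)
  let Φ : M →+ ℝ × ℝ := L.symm.toLinearMap.toAddMonoidHom.comp ι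
  rw [convexHull_parallelogram] at hdisj hcover
  set P := parallelogramMap a b '' (Icc (-1) 1 ×ˢ Icc (-1) 1)
  have hinterior : ∀ x, |(L.symm x).1| < 1 → |(L.symm x).2| < 1 → x ∈ interior P := by
    refine fun x h₁ h₂ => interior_maximal (t := L.symm ⁻¹' (Ioo (-1) 1 ×ˢ Ioo (-1) 1)) ?_
      ((isOpen_Ioo.prod isOpen_Ioo).preimage
        (LinearMap.continuous_of_finiteDimensional L.symm.toLinearMap)) ⟨abs_lt.1 h₁, abs_lt.1 h₂⟩
    intro x hx
    exact ⟨L.symm x, prod_mono Ioo_subset_Icc_self Ioo_subset_Icc_self hx, L.apply_symm_apply x⟩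
  refine ⟨(AddMonoidHom.fst ℝ ℝ).comp Φ, (AddMonoidHom.snd ℝ ℝ).comp Φ, ⟨?_, ?_⟩,
    fun z => (L.apply_symm_apply (ι z)).symm⟩
  · intro z hG hH
    by_contra hz
    have hpos : (1 / 2 : ℝ) • ι z ∈ interior P :=
      hinterior _ (by simp [Φ] at hG ⊢; linarith) (by simp [Φ] at hH ⊢; linarith)
    have hneg : -(1 / 2 : ℝ) • ι z ∈ interior P :=
      hinterior _ (by simp [Φ] at hG ⊢; linarith) (by simp [Φ] at hH ⊢; linarith)
    have hp : (1 / 2 : ℝ) • ι z ∈ interior ((fun x => x + ι z) '' P) := by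
      convert (isOpenMap_add_right (ι z)).image_interior_subset P ⟨_, hneg, rfl⟩ using 1
      module
    have hp₀ : (1 / 2 : ℝ) • ι z ∈ interior ((fun x => x + ι 0) '' P) := by simpa using hpos
    exact (hdisj z 0 hz).subset ⟨hp, hp₀⟩
  · intro x y
    obtain ⟨z, hz⟩ := mem_iUnion.1 (hcover.symm ▸ mem_univ (L (x, y)))
    obtain ⟨_, ⟨v, hv, rfl⟩, hvz⟩ := hz
    have hΦ : Φ z = (x, y) - v := L.symm_apply_eq.2 (by rw [map_sub, ← hvz]; simp [L])
    exact ⟨z, by simpa [hΦ, abs_le] using hv.1, by simpa [hΦ, abs_le] using hv.2⟩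

def intPoint : ℤ × ℤ →+ ℝ × ℝ := (Int.castAddHom ℝ).prodMap (Int.castAddHom ℝ)

@[simp]
theorem intPoint_apply (z : ℤ × ℤ) : intPoint z = ((z.1 : ℝ), (z.2 : ℝ)) := rfl

def intMatrixToLin (U : Matrix (Fin 2) (Fin 2) ℤ) : ℝ × ℝ →ₗ[ℝ] ℝ × ℝ where
  toFun x := ((U 0 0 : ℝ) * x.1 + (U 0 1 : ℝ) * x.2, (U 1 0 : ℝ) * x.1 + (U 1 1 : ℝ) * x.2)
  map_add' x y := by ext <;> simp only [Prod.fst_add, Prod.snd_add] <;> ring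
  map_smul' c x := by
    ext <;> simp only [Prod.smul_fst, Prod.smul_snd, smul_eq_mul, RingHom.id_apply] <;> ring

theorem det_eq_one_or_neg_one_of_span_eq_top {e f : ℤ × ℤ}
    (hspan : Submodule.span ℤ {e, f} = ⊤) :
    e.1 * f.2 - e.2 * f.1 = 1 ∨ e.1 * f.2 - e.2 * f.1 = -1 := by
  obtain ⟨m, n, h₁⟩ :=
    Submodule.mem_span_pair.1 (hspan ▸ Submodule.mem_top (x := ((1, 0) : ℤ × ℤ)))
  obtain ⟨m', n', h₂⟩ :=
    Submodule.mem_span_pair.1 (hspan ▸ Submodule.mem_top (x := ((0, 1) : ℤ × ℤ)))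
  simp only [Prod.ext_iff, Prod.fst_add, Prod.snd_add, Prod.smul_fst, Prod.smul_snd,
    smul_eq_mul] at h₁ h₂
  refine Int.eq_one_or_neg_one_of_mul_eq_one (v := m * n' - m' * n) ?_
  linear_combination (m' * e.2 + n' * f.2) * h₁.1 + h₂.2 - (m * e.2 + n * f.2) * h₂.1

theorem exists_intMatrixToLin_eq {e f : ℤ × ℤ} (hspan : Submodule.span ℤ {e, f} = ⊤) (k : ℤ) :
    ∃ U : Matrix (Fin 2) (Fin 2) ℤ, (U.det = 1 ∨ U.det = -1) ∧
      intMatrixToLin U (intPoint e) = (1, 0) ∧ intMatrixToLin U (intPoint f) = ((k : ℝ), 1) := by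
  obtain ⟨d, hd⟩ : ∃ d, e.1 * f.2 - e.2 * f.1 = d := ⟨_, rfl⟩
  have hdet := det_eq_one_or_neg_one_of_span_eq_top hspan
  rw [hd] at hdet
  have hd₂ : d * d = 1 := by rcases hdet with rfl | rfl <;> norm_num
  have hdℝ : (e.1 * f.2 - e.2 * f.1 : ℝ) = d := by exact_mod_cast hd
  have hd₂ℝ : (d * d : ℝ) = 1 := by exact_mod_cast hd₂
  -- `U = !![1, k; 0, 1] * (e f)⁻¹`, and `(e f)⁻¹ = d • adjugate (e f)` since `d * d = 1`
  refine ⟨!![d * f.2 - k * (d * e.2), k * (d * e.1) - d * f.1; -(d * e.2), d * e.1], ?_, ?_, ?_⟩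
  · convert hdet using 2 <;> rw [Matrix.det_fin_two_of] <;> linear_combination d * hd₂ + d ^ 2 * hd
  · ext
    · simp [intMatrixToLin]; linear_combination hd₂ℝ + d * hdℝ
    · simp [intMatrixToLin]; ring
  · ext
    · simp [intMatrixToLin]; linear_combination k * hd₂ℝ + k * d * hdℝ
    · simp [intMatrixToLin]; linear_combination hd₂ℝ + d * hdℝ

theorem exists_unimodular_image_eq {a b : ℝ × ℝ} {e f : ℤ × ℤ} {t : ℝ}
    (hspan : Submodule.span ℤ {e, f} = ⊤) (he : intPoint e = (2 : ℝ) • a)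
    (hf : intPoint f = t • a + (2 : ℝ) • b) :
    ∃ (U : Matrix (Fin 2) (Fin 2) ℤ) (α : ℝ), (U.det = 1 ∨ U.det = -1) ∧ 0 ≤ α ∧ α < 1 ∧
      intMatrixToLin U '' convexHull ℝ {a + b, a - b, -a + b, -a - b} =
        (1 / 2 : ℝ) • convexHull ℝ
          ({(-α - 1, 1), (α + 1, -1), (-α + 1, 1), (α - 1, -1)} : Set (ℝ × ℝ)) := by
  obtain ⟨U, hdet, hUe, hUf⟩ := exists_intMatrixToLin_eq hspan ⌊t / 2⌋
  have ha : intMatrixToLin U a = (1 / 2, 0) := by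
    rw [show a = (1 / 2 : ℝ) • intPoint e by rw [he, smul_smul]; norm_num, map_smul, hUe]
    simp
  have hb : intMatrixToLin U b = (-Int.fract (t / 2) / 2, 1 / 2) := by
    rw [show b = (1 / 2 : ℝ) • (intPoint f - t • a) by rw [hf]; module, map_smul, map_sub,
      map_smul, hUf, ha]
    simp only [Prod.smul_mk, Prod.mk_sub_mk, smul_eq_mul, ← Int.self_sub_floor, Prod.mk.injEq]
    constructor <;> ring
  refine ⟨U, Int.fract (t / 2), hdet, Int.fract_nonneg _, Int.fract_lt_one _, ?_⟩
  rw [image_convexHull_parallelogram, ha, hb, ← convexHull_smul]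
  congr 1
  generalize Int.fract (t / 2) = α
  simp only [smul_set_insert, smul_set_singleton, Prod.smul_mk, Prod.mk_add_mk, Prod.mk_sub_mk,
    Prod.neg_mk, smul_eq_mul]
  ring_nf
  ext
  simp only [mem_insert_iff, mem_singleton_iff]
  tauto

theorem parallelogram_tiling (a b : ℝ × ℝ) (hab : LinearIndependent ℝ ![a, b])
    (P : Set (ℝ × ℝ))
    (hP : P = convexHull ℝ ({a + b, a - b, -a + b, -a - b} : Set (ℝ × ℝ)))
    (hdisj : ∀ z z' : ℤ × ℤ, z ≠ z' →
      interior ((fun x => x + ((z.1 : ℝ), (z.2 : ℝ))) '' P) ∩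
        interior ((fun x => x + ((z'.1 : ℝ), (z'.2 : ℝ))) '' P) = ∅)
    (hcover : (⋃ z : ℤ × ℤ, (fun x => x + ((z.1 : ℝ), (z.2 : ℝ))) '' P) = Set.univ) :
    ∃ (U : Matrix (Fin 2) (Fin 2) ℤ) (α : ℝ), (U.det = 1 ∨ U.det = -1) ∧ 0 ≤ α ∧ α < 1 ∧
      (fun x : ℝ × ℝ => ((U 0 0 : ℝ) * x.1 + (U 0 1 : ℝ) * x.2,
                         (U 1 0 : ℝ) * x.1 + (U 1 1 : ℝ) * x.2)) '' P =
        (1 / 2 : ℝ) • convexHull ℝ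
          ({(-α - 1, 1), (α + 1, -1), (-α + 1, 1), (α - 1, -1)} : Set (ℝ × ℝ)) := by
  subst hP
  obtain ⟨G, H, T, hι⟩ := exists_isSquareTiling intPoint hab hdisj hcover
  obtain ⟨e, f, hspan, he, hf, he₀ | hf₀⟩ := T.exists_span_eq_top
  · exact exists_unimodular_image_eq hspan (by rw [hι, he, he₀, zero_smul, add_zero])
      (by rw [hι, hf])
  · rw [parallelogram_vertices_comm]
    exact exists_unimodular_image_eq (pair_comm e f ▸ hspan)
      (by rw [hι, hf, hf₀, zero_smul, zero_add]) (by rw [hι, he, add_comm])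
end

section
/- For 0 ≤ α < 1 let K_α = conv{±(1,α), ±(0,1)}. Then the second covering minimum satisfies μ₂(K_α) = (1/2)·max{1+α, 2−α}. -/
open MeasureTheory

/-! ### Auxiliary lemmas -/

/-- `round` minimizes distance to integers. -/
lemma round_min_aux (x : ℝ) (n : ℤ) : |x - round x| ≤ |x - n| := by
  by_cases h : n = round x
  · rw [h]
  · have h1 : (1 : ℝ) ≤ |(round x : ℝ) - n| := by
      have hne : round x - n ≠ 0 := sub_ne_zero.mpr (fun hc => h hc.symm)
      have hint : 1 ≤ |round x - n| := Int.one_le_abs hne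
      calc (1:ℝ) = ((1:ℤ):ℝ) := by norm_num
        _ ≤ ((|round x - n| : ℤ) : ℝ) := by exact_mod_cast hint
        _ = |(round x : ℝ) - n| := by push_cast [Int.cast_abs]; ring_nf
    have h2 := abs_sub_round x
    have h3 : |(round x : ℝ) - n| ≤ |x - round x| + |x - n| := by
      calc |(round x : ℝ) - n| = |((round x:ℝ) - x) + (x - n)| := by ring_nf
        _ ≤ |(round x:ℝ) - x| + |x - n| := abs_add_le _ _
        _ = |x - round x| + |x - n| := by rw [abs_sub_comm]
    linarith

/-- Key inequality: the sum of distances to ℤ of `y` and `y + α` is at most `max α (1-α)`. -/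
lemma key_ineq_aux (α : ℝ) (y : ℝ) :
    |y - round y| + |y + α - round (y + α)| ≤ max α (1 - α) := by
  set x := y - round y with hxdef
  have hx : |x| ≤ 1/2 := abs_sub_round y
  have hxb := abs_le.mp hx
  have hA : |y + α - round (y + α)| ≤ |x + α| := by
    have := round_min_aux (y + α) (round y)
    calc |y + α - round (y + α)| ≤ |y + α - round y| := this
      _ = |x + α| := by rw [hxdef]; ring_nf
  have hB : |y + α - round (y + α)| ≤ |x + α - 1| := by
    have := round_min_aux (y + α) (round y + 1)
    calc |y + α - round (y + α)| ≤ |y + α - (round y + 1 : ℤ)| := this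
      _ = |x + α - 1| := by rw [hxdef]; push_cast; ring_nf
  rcases le_or_gt x 0 with h | h
  · rcases le_or_gt 0 (x + α) with h' | h'
    · have e1 : |x| = -x := abs_of_nonpos h
      have e2 : |x + α| = x + α := abs_of_nonneg h'
      have := le_max_left α (1 - α)
      linarith
    · have e1 : |x| = -x := abs_of_nonpos h
      have e2 : |x + α| = -(x + α) := abs_of_neg h'
      have := le_max_right α (1 - α)
      linarith
  · rcases le_or_gt (x + α) 1 with h' | h'
    · have e1 : |x| = x := abs_of_pos h
      have e2 : |x + α - 1| = -(x + α - 1) := by rw [abs_of_nonpos]; linarith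
      have := le_max_right α (1 - α)
      linarith
    · have e1 : |x| = x := abs_of_pos h
      have e2 : |x + α - 1| = x + α - 1 := by rw [abs_of_pos]; linarith
      have := le_max_left α (1 - α)
      linarith

lemma max_split_aux (α : ℝ) : max (1 + α) (2 - α) = 1 + max α (1 - α) := by
  rcases le_total α (1 - α) with h | h
  · rw [max_eq_right (by linarith), max_eq_right h]; ring
  · rw [max_eq_left (by linarith), max_eq_left h]

lemma core_exists_aux (α : ℝ) (θ s : ℝ) :
    ∃ m : ℤ, |α * m + θ - round (α * m + θ)| + |s - m| ≤ 1 / 2 * max (1 + α) (2 - α) := by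
  set c : ℝ := 1 / 2 * max (1 + α) (2 - α) with hc
  have h2c : 2 * c - 1 = max α (1 - α) := by rw [hc, max_split_aux]; ring
  set m0 : ℤ := round s with hm0
  set η : ℝ := s - m0 with hη
  have hηb : |η| ≤ 1/2 := abs_sub_round s
  have hηb' := abs_le.mp hηb
  set x : ℝ := α * m0 + θ with hx
  by_cases hg : |x - round x| ≤ c - |η|
  · exact ⟨m0, by rw [← hx, ← hη]; linarith [abs_nonneg η]⟩
  · push_neg at hg
    rcases le_or_gt 0 η with hs | hs
    · refine ⟨m0 + 1, ?_⟩
      have hkey := key_ineq_aux α x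
      have e1 : α * ((m0 : ℤ) + 1 : ℤ) + θ = x + α := by push_cast; rw [hx]; ring
      have e2 : |s - ((m0 + 1 : ℤ) : ℝ)| = 1 - η := by
        push_cast; rw [abs_of_nonpos (by rw [hη] at *; linarith), hη]; ring
      rw [e1, e2]
      have : |η| = η := abs_of_nonneg hs
      linarith
    · refine ⟨m0 - 1, ?_⟩
      have hkey := key_ineq_aux α (x - α)
      rw [sub_add_cancel] at hkey
      have e1 : α * ((m0 - 1 : ℤ) : ℝ) + θ = x - α := by push_cast; rw [hx]; ring
      have e2 : |s - ((m0 - 1 : ℤ) : ℝ)| = 1 + η := by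
        push_cast; rw [show s - ((m0:ℝ) - 1) = η + 1 by rw [hη]; ring,
          abs_of_nonneg (by linarith)]; ring
      rw [e1, e2]
      have : |η| = -η := abs_of_neg hs
      linarith

lemma exists_zpair_aux (α : ℝ) (p1 p2 : ℝ) :
    ∃ m n : ℤ, |(1 - α) * (p1 - m) + (p2 - n)| ≤ 1 / 2 * max (1 + α) (2 - α) ∧
      |(1 + α) * (p1 - m) - (p2 - n)| ≤ 1 / 2 * max (1 + α) (2 - α) := by
  obtain ⟨m, hm⟩ := core_exists_aux α (p2 - α * p1) p1
  set mid : ℝ := α * m + (p2 - α * p1) with hmid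
  refine ⟨m, round mid, ?_, ?_⟩
  · have e : (1 - α) * (p1 - m) + (p2 - round mid) = (p1 - m) + (mid - round mid) := by
      rw [hmid]; ring
    calc |(1 - α) * (p1 - m) + (p2 - round mid)| = |(p1 - m) + (mid - round mid)| := by rw [e]
      _ ≤ |p1 - m| + |mid - round mid| := abs_add_le _ _
      _ ≤ 1 / 2 * max (1 + α) (2 - α) := by rw [hmid]; linarith
  · have e : (1 + α) * (p1 - m) - (p2 - round mid) = (p1 - m) - (mid - round mid) := by
      rw [hmid]; ring
    calc |(1 + α) * (p1 - m) - (p2 - round mid)| = |(p1 - m) - (mid - round mid)| := by rw [e]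
      _ ≤ |p1 - m| + |mid - round mid| := abs_sub _ _
      _ ≤ 1 / 2 * max (1 + α) (2 - α) := by rw [hmid]; linarith

lemma hull_subset_aux (α : ℝ) :
    convexHull ℝ ({(1, α), (-1, -α), (0, 1), (0, -1)} : Set (ℝ × ℝ)) ⊆
      {x : ℝ × ℝ | |(1 - α) * x.1 + x.2| ≤ 1 ∧ |(1 + α) * x.1 - x.2| ≤ 1} := by
  apply convexHull_min
  · intro x hx
    simp only [Set.mem_insert_iff, Set.mem_singleton_iff] at hx
    rcases hx with h | h | h | h <;> subst h <;>
      refine ⟨?_, ?_⟩ <;> simp only [Set.mem_setOf_eq] <;>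
        · rw [abs_le]; constructor <;> linarith
  · intro x hx y hy a b ha hb hab
    simp only [Set.mem_setOf_eq] at *
    have hx1 : (a • x + b • y).1 = a * x.1 + b * y.1 := rfl
    have hx2 : (a • x + b • y).2 = a * x.2 + b * y.2 := rfl
    constructor
    · rw [hx1, hx2]
      have e : (1 - α) * (a * x.1 + b * y.1) + (a * x.2 + b * y.2)
          = a * ((1 - α) * x.1 + x.2) + b * ((1 - α) * y.1 + y.2) := by ring
      rw [e]
      calc |a * ((1 - α) * x.1 + x.2) + b * ((1 - α) * y.1 + y.2)|
          ≤ |a * ((1 - α) * x.1 + x.2)| + |b * ((1 - α) * y.1 + y.2)| := abs_add_le _ _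
        _ = a * |(1 - α) * x.1 + x.2| + b * |(1 - α) * y.1 + y.2| := by
            rw [abs_mul, abs_mul, abs_of_nonneg ha, abs_of_nonneg hb]
        _ ≤ a * 1 + b * 1 := by gcongr; exacts [hx.1, hy.1]
        _ = 1 := by linarith
    · rw [hx1, hx2]
      have e : (1 + α) * (a * x.1 + b * y.1) - (a * x.2 + b * y.2)
          = a * ((1 + α) * x.1 - x.2) + b * ((1 + α) * y.1 - y.2) := by ring
      rw [e]
      calc |a * ((1 + α) * x.1 - x.2) + b * ((1 + α) * y.1 - y.2)|
          ≤ |a * ((1 + α) * x.1 - x.2)| + |b * ((1 + α) * y.1 - y.2)| := abs_add_le _ _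
        _ = a * |(1 + α) * x.1 - x.2| + b * |(1 + α) * y.1 - y.2| := by
            rw [abs_mul, abs_mul, abs_of_nonneg ha, abs_of_nonneg hb]
        _ ≤ a * 1 + b * 1 := by gcongr; exacts [hx.2, hy.2]
        _ = 1 := by linarith

lemma mem_hull_aux (α u v : ℝ) (hu : |u| ≤ 1) (hv : |v| ≤ 1) :
    ((u + v) / 2, (α * (u + v) + (u - v)) / 2) ∈
      convexHull ℝ ({(1, α), (-1, -α), (0, 1), (0, -1)} : Set (ℝ × ℝ)) := by
  set S : Set (ℝ × ℝ) := {(1, α), (-1, -α), (0, 1), (0, -1)} with hS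
  have hconv := convex_convexHull ℝ S
  have hsub := subset_convexHull ℝ S
  have hP1 : ((1 : ℝ), α) ∈ convexHull ℝ S := hsub (by simp [hS])
  have hP2 : ((-1 : ℝ), -α) ∈ convexHull ℝ S := hsub (by simp [hS])
  have hP3 : ((0 : ℝ), (1 : ℝ)) ∈ convexHull ℝ S := hsub (by simp [hS])
  have hP4 : ((0 : ℝ), (-1 : ℝ)) ∈ convexHull ℝ S := hsub (by simp [hS])
  have hub := abs_le.mp hu
  have hvb := abs_le.mp hv
  have ha1 : (0:ℝ) ≤ (1 + v) / 2 := by linarith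
  have ha2 : (0:ℝ) ≤ (1 - v) / 2 := by linarith
  have hab : (1 + v) / 2 + (1 - v) / 2 = 1 := by ring
  have hQ1 : ((1 + v) / 2) • ((1 : ℝ), α) + ((1 - v) / 2) • ((0 : ℝ), (1 : ℝ))
      ∈ convexHull ℝ S := hconv hP1 hP3 ha1 ha2 hab
  have hQ2 : ((1 + v) / 2) • ((0 : ℝ), (-1 : ℝ)) + ((1 - v) / 2) • ((-1 : ℝ), -α)
      ∈ convexHull ℝ S := hconv hP4 hP2 ha1 ha2 hab
  have hb1 : (0:ℝ) ≤ (1 + u) / 2 := by linarith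
  have hb2 : (0:ℝ) ≤ (1 - u) / 2 := by linarith
  have hbb : (1 + u) / 2 + (1 - u) / 2 = 1 := by ring
  have hT := hconv hQ1 hQ2 hb1 hb2 hbb
  convert hT using 1
  simp only [Prod.smul_mk, smul_eq_mul, Prod.mk_add_mk, Prod.mk.injEq]
  constructor <;> ring

lemma max_abs_id_aux (a b : ℝ) : |a| + |b| ≤ max |a + b| |a - b| := by
  have h1 := le_abs_self (a + b)
  have h2 := neg_abs_le (a + b)
  have h3 := le_abs_self (a - b)
  have h4 := neg_abs_le (a - b)
  have m1 := le_max_left |a + b| |a - b|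
  have m2 := le_max_right |a + b| |a - b|
  rcases abs_cases a with ⟨e, _⟩ | ⟨e, _⟩ <;> rcases abs_cases b with ⟨f, _⟩ | ⟨f, _⟩ <;>
    rw [e, f] <;> linarith

lemma int_dist_aux (x : ℝ) (n : ℤ) : min x (1 - x) ≤ |x - n| := by
  rcases le_or_gt n 0 with h | h
  · have : (n : ℝ) ≤ 0 := by exact_mod_cast h
    calc min x (1 - x) ≤ x := min_le_left _ _
      _ ≤ x - n := by linarith
      _ ≤ |x - n| := le_abs_self _
  · have : (1 : ℝ) ≤ (n : ℝ) := by exact_mod_cast h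
    calc min x (1 - x) ≤ 1 - x := min_le_right _ _
      _ ≤ (n : ℝ) - x := by linarith
      _ ≤ |x - n| := by rw [abs_sub_comm]; exact le_abs_self _

lemma deep_hole_aux (α : ℝ) (h0 : 0 ≤ α) (h1 : α < 1) :
    ∃ p : ℝ × ℝ, ∀ m n : ℤ,
      1 / 2 * max (1 + α) (2 - α) ≤
        max |(1 - α) * (p.1 - m) + (p.2 - n)| |(1 + α) * (p.1 - m) - (p.2 - n)| := by
  set c : ℝ := 1 / 2 * max (1 + α) (2 - α) with hcdef
  have hc1 : c ≤ 1 := by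
    have : max (1 + α) (2 - α) ≤ 2 := max_le (by linarith) (by linarith)
    rw [hcdef]; linarith
  rcases le_or_gt α (1 / 2) with hα | hα
  · have hc : c = (2 - α) / 2 := by
      rw [hcdef, max_eq_right (by linarith)]; ring
    refine ⟨(1 / 2, 1 / 2), fun m n => ?_⟩
    have key : c ≤ |(1 / 2 : ℝ) - m| + |α * m + (1 - α) / 2 - n| := by
      by_cases hm : m = 0
      · subst hm
        have := int_dist_aux ((1 - α) / 2) n
        rw [min_eq_left (by linarith)] at this
        have e : |α * ((0 : ℤ) : ℝ) + (1 - α) / 2 - n| = |(1 - α) / 2 - n| := by norm_num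
        rw [e]
        have h05 : |(1 / 2 : ℝ) - ((0 : ℤ) : ℝ)| = 1 / 2 := by norm_num
        rw [h05, hc]; linarith
      · by_cases hm' : m = 1
        · subst hm'
          have := int_dist_aux ((1 + α) / 2) n
          rw [min_eq_right (by linarith)] at this
          have e : α * ((1 : ℤ) : ℝ) + (1 - α) / 2 = (1 + α) / 2 := by push_cast; ring
          rw [e]
          have h05 : |(1 / 2 : ℝ) - ((1 : ℤ) : ℝ)| = 1 / 2 := by norm_num
          rw [h05, hc]; linarith
        · have hmm : m ≤ -1 ∨ 2 ≤ m := by omega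
          have h32 : (3 / 2 : ℝ) ≤ |(1 / 2 : ℝ) - m| := by
            rcases hmm with h | h
            · have : (m : ℝ) ≤ -1 := by exact_mod_cast h
              rw [abs_of_nonneg (by linarith)]; linarith
            · have : (2 : ℝ) ≤ (m : ℝ) := by exact_mod_cast h
              rw [abs_of_nonpos (by linarith)]; linarith
          have := abs_nonneg (α * m + (1 - α) / 2 - n)
          linarith
    refine le_trans key (le_trans (max_abs_id_aux ((1 / 2 : ℝ) - m) (α * m + (1 - α) / 2 - n)) ?_)
    have e1 : ((1 / 2 : ℝ) - m) + (α * m + (1 - α) / 2 - n)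
        = (1 - α) * (((1 / 2 : ℝ), (1 / 2 : ℝ)).1 - m) + (((1 / 2 : ℝ), (1 / 2 : ℝ)).2 - n) := by
      simp only []; ring
    have e2 : ((1 / 2 : ℝ) - m) - (α * m + (1 - α) / 2 - n)
        = (1 + α) * (((1 / 2 : ℝ), (1 / 2 : ℝ)).1 - m) - (((1 / 2 : ℝ), (1 / 2 : ℝ)).2 - n) := by
      simp only []; ring
    rw [e1, e2]
  · have hc : c = (1 + α) / 2 := by
      rw [hcdef, max_eq_left (by linarith)]; ring
    refine ⟨(1 / 2, 0), fun m n => ?_⟩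
    have key : c ≤ |(1 / 2 : ℝ) - m| + |α * m + (-α / 2) - n| := by
      by_cases hm : m = 0
      · subst hm
        have := int_dist_aux (α / 2) (-n)
        rw [min_eq_left (by linarith)] at this
        have e : |α * ((0 : ℤ) : ℝ) + (-α / 2) - n| = |α / 2 - ((-n : ℤ) : ℝ)| := by
          push_cast
          rw [show α * 0 + (-α / 2) - (n : ℝ) = -(α / 2 - (-(n : ℝ))) by ring, abs_neg]
        rw [e]
        have h05 : |(1 / 2 : ℝ) - ((0 : ℤ) : ℝ)| = 1 / 2 := by norm_num
        rw [h05, hc]; linarith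
      · by_cases hm' : m = 1
        · subst hm'
          have := int_dist_aux (α / 2) n
          rw [min_eq_left (by linarith)] at this
          have e : α * ((1 : ℤ) : ℝ) + (-α / 2) = α / 2 := by push_cast; ring
          rw [e]
          have h05 : |(1 / 2 : ℝ) - ((1 : ℤ) : ℝ)| = 1 / 2 := by norm_num
          rw [h05, hc]; linarith
        · have hmm : m ≤ -1 ∨ 2 ≤ m := by omega
          have h32 : (3 / 2 : ℝ) ≤ |(1 / 2 : ℝ) - m| := by
            rcases hmm with h | h
            · have : (m : ℝ) ≤ -1 := by exact_mod_cast h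
              rw [abs_of_nonneg (by linarith)]; linarith
            · have : (2 : ℝ) ≤ (m : ℝ) := by exact_mod_cast h
              rw [abs_of_nonpos (by linarith)]; linarith
          have := abs_nonneg (α * m + (-α / 2) - n)
          linarith
    refine le_trans key (le_trans (max_abs_id_aux ((1 / 2 : ℝ) - m) (α * m + (-α / 2) - n)) ?_)
    have e1 : ((1 / 2 : ℝ) - m) + (α * m + (-α / 2) - n)
        = (1 - α) * (((1 / 2 : ℝ), (0 : ℝ)).1 - m) + ((((1 / 2 : ℝ), (0 : ℝ)).2 : ℝ) - n) := by
      simp only []; ring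
    have e2 : ((1 / 2 : ℝ) - m) - (α * m + (-α / 2) - n)
        = (1 + α) * (((1 / 2 : ℝ), (0 : ℝ)).1 - m) - ((((1 / 2 : ℝ), (0 : ℝ)).2 : ℝ) - n) := by
      simp only []; ring
    rw [e1, e2]

theorem mu2_K_alpha (α : ℝ) (h0 : 0 ≤ α) (h1 : α < 1) :
    mu2 (convexHull ℝ ({(1, α), (-1, -α), (0, 1), (0, -1)} : Set (ℝ × ℝ))) =
      1 / 2 * max (1 + α) (2 - α) := by
  set K : Set (ℝ × ℝ) := convexHull ℝ ({(1, α), (-1, -α), (0, 1), (0, -1)} : Set (ℝ × ℝ))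
    with hK
  set c : ℝ := 1 / 2 * max (1 + α) (2 - α) with hc
  have hcpos : 0 < c := by
    have := le_max_right (1 + α) (2 - α)
    rw [hc]; nlinarith
  have hcne : c ≠ 0 := ne_of_gt hcpos
  -- Part A: Covers c K
  have hcov : Covers c K := by
    intro p
    obtain ⟨m, n, hU, hV⟩ := exists_zpair_aux α p.1 p.2
    rw [← hc] at hU hV
    set u : ℝ := ((1 - α) * (p.1 - m) + (p.2 - n)) / c with hu_def
    set v : ℝ := ((1 + α) * (p.1 - m) - (p.2 - n)) / c with hv_def
    have hu : |u| ≤ 1 := by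
      rw [hu_def, abs_div, abs_of_pos hcpos]
      exact (div_le_one hcpos).mpr hU
    have hv : |v| ≤ 1 := by
      rw [hv_def, abs_div, abs_of_pos hcpos]
      exact (div_le_one hcpos).mpr hV
    have hmem := mem_hull_aux α u v hu hv
    have hxeq : (((u + v) / 2 : ℝ), ((α * (u + v) + (u - v)) / 2 : ℝ))
        = (((p.1 - m) / c : ℝ), ((p.2 - n) / c : ℝ)) := by
      rw [hu_def, hv_def, Prod.mk.injEq]
      constructor <;> · field_simp; ring
    rw [hxeq] at hmem
    refine ⟨((p.1 - m) / c, (p.2 - n) / c), hmem, (m, n), ?_⟩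
    have hsm : c • ((((p.1 - m) / c : ℝ), ((p.2 - n) / c : ℝ)) : ℝ × ℝ)
        = ((p.1 - m : ℝ), (p.2 - n : ℝ)) := by
      rw [Prod.smul_mk, smul_eq_mul, smul_eq_mul, Prod.mk.injEq]
      constructor <;> field_simp
    rw [hsm, Prod.mk_add_mk]
    rw [Prod.ext_iff]
    constructor <;> · simp only []; ring
  -- Part B: lower bound
  have hlow : ∀ t ∈ {t : ℝ | 0 ≤ t ∧ Covers t K}, c ≤ t := by
    rintro t ⟨ht0, hcovt⟩
    obtain ⟨p, hp⟩ := deep_hole_aux α h0 h1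
    rw [← hc] at hp
    obtain ⟨x, hxK, z, hz⟩ := hcovt p
    obtain ⟨hxa, hxb⟩ := hull_subset_aux α hxK
    have e1 : p.1 = t * x.1 + z.1 := by rw [hz]; rfl
    have e2 : p.2 = t * x.2 + z.2 := by rw [hz]; rfl
    have hA : |(1 - α) * (p.1 - z.1) + (p.2 - z.2)| ≤ t := by
      have e : (1 - α) * (p.1 - z.1) + (p.2 - z.2) = t * ((1 - α) * x.1 + x.2) := by
        rw [e1, e2]; ring
      rw [e, abs_mul, abs_of_nonneg ht0]
      calc t * |(1 - α) * x.1 + x.2| ≤ t * 1 := by gcongr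
        _ = t := mul_one t
    have hB : |(1 + α) * (p.1 - z.1) - (p.2 - z.2)| ≤ t := by
      have e : (1 + α) * (p.1 - z.1) - (p.2 - z.2) = t * ((1 + α) * x.1 - x.2) := by
        rw [e1, e2]; ring
      rw [e, abs_mul, abs_of_nonneg ht0]
      calc t * |(1 + α) * x.1 - x.2| ≤ t * 1 := by gcongr
        _ = t := mul_one t
    exact le_trans (hp z.1 z.2) (max_le hA hB)
  have hmem : c ∈ {t : ℝ | 0 ≤ t ∧ Covers t K} := ⟨le_of_lt hcpos, hcov⟩
  show sInf {t : ℝ | 0 ≤ t ∧ Covers t K} = c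
  exact le_antisymm (csInf_le ⟨c, fun t ht => hlow t ht⟩ hmem) (le_csInf ⟨c, hmem⟩ hlow)
end
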